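/- arXiv:2207.04495 — 3 statements merged into one kernel-verified Lean document; each statement's English description precedes it below -/
import Mathlib

section
/- For every integer m ≥ 1, the set {q_α : α ∈ ℕ^m, |α| = 2} ∪ {p_β : β ∈ ℕ^m, |β| = n} is a minimal homogeneous generating system of the ℂ-algebra ℂ[V^m]^{D_{2n}}: these elements generate ℂ[V^m]^{D_{2n}} as a ℂ-algebra, and no proper subset of them generates it. -/
open MvPolynomial

noncomputable section

/-- `ℂ[V^m]` for `V = ℂ²`: variable `(0, i)` is `xᵢ`, variable `(1, i)` is `yᵢ`. -/
abbrev PolyVm (m : ℕ) : Type := MvPolynomial (Fin 2 × Fin m) ℂ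

/-- A `Finsupp` on `Fin m` built from a tuple. -/
def fsOf {m : ℕ} (v : Fin m → ℕ) : Fin m →₀ ℕ := Finsupp.equivFunOnFinite.symm v

@[simp] lemma fsOf_apply {m : ℕ} (v : Fin m → ℕ) (i : Fin m) : fsOf v i = v i := rfl

lemma fsOf_sum2 (a b : ℕ) : ∑ i, fsOf ![a, b] i = a + b := by
  simp [Fin.sum_univ_two]

lemma fsOf_sum3 (a b c : ℕ) : ∑ i, fsOf ![a, b, c] i = a + b + c := by
  simp [Fin.sum_univ_three]

/-- The polarization `p_β = x^β + y^β` of `p = xⁿ + yⁿ`. -/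
def pPoly {m : ℕ} (β : Fin m →₀ ℕ) : PolyVm m :=
  (∏ i, X (0, i) ^ β i) + (∏ i, X (1, i) ^ β i)

/-- The polarization `q_α` of `q = xy` : `q_{2eᵢ} = xᵢyᵢ` and
`q_{eᵢ+eⱼ} = (xᵢyⱼ + xⱼyᵢ)/2` for `i ≠ j`. -/
def qPoly {m : ℕ} (α : Fin m →₀ ℕ) : PolyVm m :=
  ((((Finset.univ.filter fun ij : Fin m × Fin m =>
      Finsupp.single ij.1 1 + Finsupp.single ij.2 1 = α).card : ℕ) : ℂ))⁻¹ •
  ∑ ij ∈ Finset.univ.filter (fun ij : Fin m × Fin m =>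
      Finsupp.single ij.1 1 + Finsupp.single ij.2 1 = α),
    X (0, ij.1) * X (1, ij.2)

/-- Variables of the free symmetric algebra `F(n,m)`: `ρ_α` for `|α| = 2`
(left summand) and `π_β` for `|β| = n` (right summand). -/
abbrev FVar (n m : ℕ) : Type :=
  {d : Fin m →₀ ℕ // ∑ i, d i = 2} ⊕ {d : Fin m →₀ ℕ // ∑ i, d i = n}

/-- The polynomial algebra `F(n,m) = ℂ[ρ_α, π_β]`. -/
abbrev FAlg (n m : ℕ) : Type := MvPolynomial (FVar n m) ℂ

/-- The canonical surjection `φ(n,m) : F(n,m) → ℂ[V^m]^{D_{2n}} ⊆ ℂ[V^m]`,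
`ρ_α ↦ q_α`, `π_β ↦ p_β`. -/
def phi (n m : ℕ) : FAlg n m →ₐ[ℂ] PolyVm m :=
  aeval (Sum.elim (fun a => qPoly a.1) (fun b => pPoly b.1))

/-- The weights of the grading of `F(n,m)`: `deg ρ_α = 2`, `deg π_β = n`. -/
def wF (n m : ℕ) : FVar n m → ℕ := Sum.elim (fun _ => 2) (fun _ => n)

/-- The matrix `diag(ω, ω⁻¹)`. -/
def dMat (ω : ℂ) : Matrix (Fin 2) (Fin 2) ℂ := !![ω, 0; 0, ω⁻¹]

/-- The matrix `((0,1),(1,0))`. -/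
def sMat : Matrix (Fin 2) (Fin 2) ℂ := !![0, 1; 1, 0]

/-- The action of a `2×2` matrix `g` on `ℂ[V^m]` (diagonal action on the `m`
vector variables): `x_{a,i} ↦ ∑_b g_{a b} x_{b,i}`. -/
def actG {m : ℕ} (g : Matrix (Fin 2) (Fin 2) ℂ) : PolyVm m →ₐ[ℂ] PolyVm m :=
  aeval fun p => ∑ b : Fin 2, g p.1 b • X (b, p.2)

/-- The subalgebra of `ℂ[V^m]` of polynomials invariant under (the group
generated by) a set `S` of `2×2` matrices. -/
def invAlg (m : ℕ) (S : Set (Matrix (Fin 2) (Fin 2) ℂ)) : Subalgebra ℂ (PolyVm m) where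
  carrier := {f | ∀ g ∈ Submonoid.closure S, actG g f = f}
  mul_mem' := fun ha hb => by
    intro g hg
    rw [map_mul, ha g hg, hb g hg]
  add_mem' := fun ha hb => by
    intro g hg
    rw [map_add, ha g hg, hb g hg]
  algebraMap_mem' := fun c => by
    intro g hg
    exact (actG g).commutes c

/-- The invariant algebra `ℂ[V^m]^{D_{2n}}`, where `D_{2n}` is generated by
`diag(ω, ω⁻¹)` and `((0,1),(1,0))`. -/
def dihedralInv (m : ℕ) (ω : ℂ) : Subalgebra ℂ (PolyVm m) :=
  invAlg m {dMat ω, sMat}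


/-- The set of all polarizations `q_α` (`|α| = 2`) and `p_β` (`|β| = n`) in `ℂ[V^m]`. -/
def genSet (n m : ℕ) : Set (PolyVm m) :=
  {f | ∃ α : Fin m →₀ ℕ, (∑ i, α i) = 2 ∧ f = qPoly α} ∪
  {f | ∃ β : Fin m →₀ ℕ, (∑ i, β i) = n ∧ f = pPoly β}


namespace Dih
open Finsupp

variable {m : ℕ}

/-- x^A -/
def xm (A : Fin m →₀ ℕ) : PolyVm m := ∏ i, X (0, i) ^ A i
/-- y^A -/
def ym (A : Fin m →₀ ℕ) : PolyVm m := ∏ i, X (1, i) ^ A i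
/-- symmetrized monomial pair -/
def SP (A B : Fin m →₀ ℕ) : PolyVm m := xm A * ym B + xm B * ym A

lemma xm_add (A B : Fin m →₀ ℕ) : xm (A + B) = xm A * xm B := by
  simp [xm, pow_add, Finset.prod_mul_distrib]

lemma ym_add (A B : Fin m →₀ ℕ) : ym (A + B) = ym A * ym B := by
  simp [ym, pow_add, Finset.prod_mul_distrib]

lemma xm_zero : xm (0 : Fin m →₀ ℕ) = 1 := by simp [xm]
lemma ym_zero : ym (0 : Fin m →₀ ℕ) = 1 := by simp [ym]

lemma xm_single (a : Fin m) : xm (Finsupp.single a 1) = X (0, a) := by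
  rw [xm]
  rw [Finset.prod_eq_single a (by intro b _ hb; simp [Finsupp.single_eq_of_ne' (Ne.symm hb)])
    (by simp)]
  simp

lemma ym_single (a : Fin m) : ym (Finsupp.single a 1) = X (1, a) := by
  rw [ym]
  rw [Finset.prod_eq_single a (by intro b _ hb; simp [Finsupp.single_eq_of_ne' (Ne.symm hb)])
    (by simp)]
  simp

lemma SP_comm (A B : Fin m →₀ ℕ) : SP A B = SP B A := by simp [SP]; ring

lemma pPoly_eq (β : Fin m →₀ ℕ) : pPoly β = xm β + ym β := rfl

lemma sum_single_one (a : Fin m) : ∑ i, (Finsupp.single a 1 : Fin m →₀ ℕ) i = 1 := by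
  simp [Finsupp.single_apply]

/-- the symmetric quadratic generator -/
def Bq (a b : Fin m) : PolyVm m := X (0,a) * X (1,b) + X (0,b) * X (1,a)
/-- the antisymmetric quadratic -/
def Dq (a b : Fin m) : PolyVm m := X (0,a) * X (1,b) - X (0,b) * X (1,a)

lemma Dq_mul_Dq (a b c d : Fin m) :
    Dq a b * Dq c d = Bq a d * Bq b c - Bq a c * Bq b d := by
  simp only [Dq, Bq]; ring

lemma pair_eq_iff {i j a b : Fin m} :
    Finsupp.single i 1 + Finsupp.single j 1 = Finsupp.single a 1 + Finsupp.single b 1 ↔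
      (i = a ∧ j = b) ∨ (i = b ∧ j = a) := by
  rw [Finsupp.single_add_single_eq_single_add_single one_ne_zero one_ne_zero]
  constructor
  · intro h
    rcases h with h | h | h
    · exact Or.inl h
    · exact Or.inr h.2
    · exact absurd h.1 (by norm_num)
  · intro h
    rcases h with h | h
    · exact Or.inl h
    · exact Or.inr (Or.inl ⟨rfl, h⟩)

lemma qPoly_pair (a b : Fin m) :
    qPoly (Finsupp.single a 1 + Finsupp.single b 1) = (2:ℂ)⁻¹ • Bq a b := by
  by_cases hab : a = b
  · subst hab
    have hF : (Finset.univ.filter fun ij : Fin m × Fin m =>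
        Finsupp.single ij.1 1 + Finsupp.single ij.2 1
          = Finsupp.single a 1 + Finsupp.single a 1) = {(a,a)} := by
      ext ⟨i,j⟩
      simp only [Finset.mem_filter, Finset.mem_univ, true_and, Finset.mem_singleton,
        pair_eq_iff, Prod.mk.injEq]
      tauto
    rw [qPoly, hF]
    simp only [Finset.card_singleton, Nat.cast_one, inv_one, one_smul, Finset.sum_singleton]
    rw [Bq, smul_add, ← add_smul]
    norm_num
  · have hF : (Finset.univ.filter fun ij : Fin m × Fin m =>
        Finsupp.single ij.1 1 + Finsupp.single ij.2 1
          = Finsupp.single a 1 + Finsupp.single b 1) = {(a,b), (b,a)} := by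
      ext ⟨i,j⟩
      simp only [Finset.mem_filter, Finset.mem_univ, true_and, Finset.mem_insert,
        Finset.mem_singleton, pair_eq_iff, Prod.mk.injEq]
    have hcard : ({(a,b), (b,a)} : Finset (Fin m × Fin m)).card = 2 := by
      rw [Finset.card_insert_of_notMem (by simp [Prod.ext_iff]; tauto), Finset.card_singleton]
    rw [qPoly, hF, hcard]
    rw [Finset.sum_insert (by simp [Prod.ext_iff]; tauto), Finset.sum_singleton]
    norm_num [Bq]

def AD (n m : ℕ) : Subalgebra ℂ (PolyVm m) := Algebra.adjoin ℂ (genSet n m)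

lemma q_mem {n : ℕ} {α : Fin m →₀ ℕ} (hα : ∑ i, α i = 2) : qPoly α ∈ AD n m :=
  Algebra.subset_adjoin (Or.inl ⟨α, hα, rfl⟩)

lemma p_mem {n : ℕ} {β : Fin m →₀ ℕ} (hβ : ∑ i, β i = n) : pPoly β ∈ AD n m :=
  Algebra.subset_adjoin (Or.inr ⟨β, hβ, rfl⟩)

lemma sum_apply_add (A B : Fin m →₀ ℕ) : ∑ i, (A + B) i = (∑ i, A i) + ∑ i, B i := by
  simp [Finsupp.coe_add, Pi.add_apply, Finset.sum_add_distrib]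

lemma sum_pair (a b : Fin m) :
    ∑ i, (Finsupp.single a 1 + Finsupp.single b 1 : Fin m →₀ ℕ) i = 2 := by
  rw [sum_apply_add, sum_single_one, sum_single_one]

lemma Bq_mem (n : ℕ) (a b : Fin m) : Bq a b ∈ AD n m := by
  have h := q_mem (n := n) (sum_pair a b)
  rw [qPoly_pair] at h
  have h2 := Subalgebra.smul_mem _ h (2:ℂ)
  rwa [smul_inv_smul₀ two_ne_zero] at h2

/-- product over a list of pairs of `x_a y_b` -/
def PiL (L : List (Fin m × Fin m)) : PolyVm m := (L.map fun p => X (0,p.1) * X (1,p.2)).prod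
/-- its mirror -/
def PiLs (L : List (Fin m × Fin m)) : PolyVm m := (L.map fun p => X (0,p.2) * X (1,p.1)).prod

lemma key (n : ℕ) (w wy : PolyVm m) (hp : w + wy ∈ AD n m)
    (hd : ∀ a b : Fin m, (w - wy) * Dq a b ∈ AD n m) :
    ∀ L : List (Fin m × Fin m),
      (w * PiL L + wy * PiLs L ∈ AD n m) ∧
      ∀ c d : Fin m, Dq c d * (w * PiL L - wy * PiLs L) ∈ AD n m := by
  intro L
  induction L with
  | nil =>
      simp only [PiL, PiLs, List.map_nil, List.prod_nil, mul_one]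
      exact ⟨hp, fun c d => by rw [mul_comm]; exact hd c d⟩
  | cons p L ih =>
      have hPi : PiL (p :: L) = (X (0,p.1) * X (1,p.2)) * PiL L := by
        simp [PiL]
      have hPis : PiLs (p :: L) = (X (0,p.2) * X (1,p.1)) * PiLs L := by
        simp [PiLs]
      constructor
      · have hid : (2:ℂ)⁻¹ • (Bq p.1 p.2 * (w * PiL L + wy * PiLs L)
                + Dq p.1 p.2 * (w * PiL L - wy * PiLs L))
            = w * PiL (p :: L) + wy * PiLs (p :: L) := by
          rw [inv_smul_eq_iff₀ two_ne_zero, two_smul, hPi, hPis]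
          simp only [Bq, Dq]; ring
        rw [← hid]
        exact Subalgebra.smul_mem _
          (add_mem (mul_mem (Bq_mem n p.1 p.2) ih.1) (ih.2 p.1 p.2)) _
      · intro c d
        have hid : (2:ℂ)⁻¹ • (Bq p.1 p.2 * (Dq c d * (w * PiL L - wy * PiLs L))
              + (Bq c p.2 * Bq d p.1 - Bq c p.1 * Bq d p.2) * (w * PiL L + wy * PiLs L))
            = Dq c d * (w * PiL (p :: L) - wy * PiLs (p :: L)) := by
          rw [inv_smul_eq_iff₀ two_ne_zero, two_smul, hPi, hPis]
          simp only [Bq, Dq]; ring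
        rw [← hid]
        refine Subalgebra.smul_mem _ (add_mem (mul_mem (Bq_mem n p.1 p.2) (ih.2 c d))
          (mul_mem (sub_mem (mul_mem (Bq_mem n c p.2) (Bq_mem n d p.1))
            (mul_mem (Bq_mem n c p.1) (Bq_mem n d p.2))) ih.1)) _

lemma coreC {n : ℕ} {δ : Fin m →₀ ℕ} (hδ : (∑ i, δ i) + 1 = n) (d c b : Fin m) :
    SP (δ + Finsupp.single d 1 + Finsupp.single c 1) (Finsupp.single b 1) ∈ AD n m := by
  have hsum : ∀ e : Fin m, ∑ i, (δ + Finsupp.single e 1 : Fin m →₀ ℕ) i = n := by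
    intro e
    rw [sum_apply_add, sum_single_one]; omega
  have e1 := mul_mem (p_mem (hsum d)) (Bq_mem n c b)
  have e2 := mul_mem (p_mem (hsum c)) (Bq_mem n d b)
  have e3 := mul_mem (p_mem (hsum b)) (Bq_mem n d c)
  have hid : (2:ℂ)⁻¹ • (pPoly (δ + Finsupp.single d 1) * Bq c b
        + pPoly (δ + Finsupp.single c 1) * Bq d b
        - pPoly (δ + Finsupp.single b 1) * Bq d c)
      = SP (δ + Finsupp.single d 1 + Finsupp.single c 1) (Finsupp.single b 1) := by
    rw [inv_smul_eq_iff₀ two_ne_zero, two_smul]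
    simp only [pPoly_eq, SP, Bq, xm_add, ym_add, xm_single, ym_single]; ring
  rw [← hid]
  exact Subalgebra.smul_mem _ (sub_mem (add_mem e1 e2) e3) _

lemma exists_cons {t : ℕ} {A : Fin m →₀ ℕ} (hA : ∑ i, A i = t + 1) :
    ∃ (A' : Fin m →₀ ℕ) (c : Fin m), A = A' + Finsupp.single c 1 ∧ ∑ i, A' i = t := by
  have hex : ∃ c, A c ≠ 0 := by
    by_contra h
    push_neg at h
    exact absurd hA (by simp [h])
  obtain ⟨c, hc⟩ := hex
  have hEq : A = (A - Finsupp.single c 1) + Finsupp.single c 1 := by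
    ext i
    simp only [Finsupp.coe_add, Pi.add_apply, Finsupp.tsub_apply, Finsupp.single_apply]
    rcases eq_or_ne c i with rfl | h
    · rw [if_pos rfl]; omega
    · simp [h]
  refine ⟨A - Finsupp.single c 1, c, hEq, ?_⟩
  have h2 := hA
  rw [hEq, sum_apply_add, sum_single_one] at h2
  omega

lemma hdD {n : ℕ} {β : Fin m →₀ ℕ} (hβ : ∑ i, β i = n) (hn1 : 1 ≤ n) (a b : Fin m) :
    (xm β - ym β) * Dq a b ∈ AD n m := by
  obtain ⟨δ, d, rfl, hδ⟩ := exists_cons (A := β) (t := n - 1) (by omega)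
  have hid : (xm (δ + Finsupp.single d 1) - ym (δ + Finsupp.single d 1)) * Dq a b
      = SP (δ + Finsupp.single d 1 + Finsupp.single a 1) (Finsupp.single b 1)
        - SP (δ + Finsupp.single d 1 + Finsupp.single b 1) (Finsupp.single a 1) := by
    simp only [SP, Dq, xm_add, ym_add, xm_single, ym_single]; ring
  rw [hid]
  exact sub_mem (coreC (by omega) d a b) (coreC (by omega) d b a)

lemma exists_split {A : Fin m →₀ ℕ} : ∀ {t : ℕ}, t ≤ ∑ i, A i →
    ∃ B C : Fin m →₀ ℕ, A = B + C ∧ ∑ i, B i = t := by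
  intro t
  induction t with
  | zero => intro _; exact ⟨0, A, (zero_add A).symm, by simp⟩
  | succ t ih =>
      intro ht
      obtain ⟨B, C, hBC, hB⟩ := ih (by omega)
      have hsum : ∑ i, A i = (∑ i, B i) + ∑ i, C i := by
        rw [hBC, sum_apply_add]
      have hC : ∑ i, C i = (∑ i, A i - t - 1) + 1 := by omega
      obtain ⟨C', c, hC', hC'sum⟩ := exists_cons hC
      refine ⟨B + Finsupp.single c 1, C', ?_, ?_⟩
      · rw [hBC, hC']; abel
      · rw [sum_apply_add, sum_single_one, hB]

lemma list_prod_zip (f g : Fin m → PolyVm m) :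
    ∀ (l1 l2 : List (Fin m)), l1.length = l2.length →
      ((l1.zip l2).map fun p => f p.1 * g p.2).prod = (l1.map f).prod * (l2.map g).prod := by
  intro l1
  induction l1 with
  | nil =>
      intro l2 h
      cases l2 with
      | nil => simp
      | cons b l2 => simp at h
  | cons a l1 ih =>
      intro l2 h
      cases l2 with
      | nil => simp at h
      | cons b l2 =>
          simp only [List.zip_cons_cons, List.map_cons, List.prod_cons,
            ih l2 (by simpa using h)]
          ring

lemma multiset_map_prod (g : Fin m → PolyVm m) (A : Fin m →₀ ℕ) :
    (A.toMultiset.map g).prod = ∏ i, g i ^ A i := by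
  induction A using Finsupp.induction with
  | zero => simp
  | single_add a b f ha hb ih =>
      rw [Finsupp.toMultiset_add, Multiset.map_add, Multiset.prod_add, ih,
        Finsupp.toMultiset_single, Multiset.map_nsmul, Multiset.map_singleton,
        Multiset.prod_nsmul, Multiset.prod_singleton]
      have : ∀ i, g i ^ (Finsupp.single a b + f) i = g i ^ (Finsupp.single a b) i * g i ^ f i := by
        intro i
        rw [Finsupp.coe_add, Pi.add_apply, pow_add]
      rw [Finset.prod_congr rfl fun i _ => this i, Finset.prod_mul_distrib]
      congr 1
      rw [Finset.prod_eq_single a (fun i _ hi => by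
        rw [Finsupp.single_apply, if_neg (Ne.symm hi), pow_zero]) (by simp)]
      rw [Finsupp.single_apply, if_pos rfl]

lemma toList_length (A : Fin m →₀ ℕ) : A.toMultiset.toList.length = ∑ i, A i := by
  rw [Multiset.length_toList, Finsupp.card_toMultiset]
  exact Finsupp.sum_fintype _ _ fun _ => rfl

lemma list_map_prod_toList (g : Fin m → PolyVm m) (A : Fin m →₀ ℕ) :
    ((A.toMultiset.toList.map g).prod : PolyVm m) = ∏ i, g i ^ A i := by
  rw [← multiset_map_prod g A]
  rw [← Multiset.coe_toList A.toMultiset, Multiset.map_coe, Multiset.prod_coe,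
    Multiset.coe_toList]

lemma PiL_PiLs (A B : Fin m →₀ ℕ) (h : ∑ i, A i = ∑ i, B i) :
    ∃ L : List (Fin m × Fin m), PiL L = xm A * ym B ∧ PiLs L = xm B * ym A := by
  refine ⟨A.toMultiset.toList.zip B.toMultiset.toList, ?_, ?_⟩
  · rw [PiL, list_prod_zip (fun a => X (0,a)) (fun b => X (1,b)) _ _
      (by rw [toList_length, toList_length, h])]
    rw [list_map_prod_toList, list_map_prod_toList]
    rfl
  · have hfun : (fun p : Fin m × Fin m => X (0,p.2) * X (1,p.1) : Fin m × Fin m → PolyVm m)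
        = fun p => (fun a => X (1,a)) p.1 * (fun b => X (0,b)) p.2 := by
      funext p; ring
    rw [PiLs, hfun, list_prod_zip (fun a => X (1,a)) (fun b => X (0,b)) _ _
      (by rw [toList_length, toList_length, h])]
    rw [list_map_prod_toList, list_map_prod_toList]
    rw [mul_comm]
    rfl

lemma SP_mem {n : ℕ} (hn1 : 1 ≤ n) :
    ∀ (k : ℕ) (A B : Fin m →₀ ℕ), (∑ i, A i) = (∑ i, B i) + k * n → SP A B ∈ AD n m := by
  intro k
  induction k using Nat.strong_induction_on with
  | _ k ih =>
    rcases k with _ | _ | k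
    ·
        intro A B hAB
        rw [Nat.zero_mul, Nat.add_zero] at hAB
        obtain ⟨L, hL, hLs⟩ := PiL_PiLs A B hAB
        have h := (key n 1 1 (by
            have : (1 : PolyVm m) + 1 ∈ AD n m := add_mem (one_mem _) (one_mem _)
            exact this)
          (fun a b => by simp only [sub_self, zero_mul]; exact zero_mem _) L).1
        rw [hL, hLs, one_mul, one_mul] at h
        exact h
    ·
        intro A B hAB
        rw [Nat.one_mul] at hAB
        obtain ⟨β, A₂, hA, hβ⟩ := exists_split (A := A) (t := n) (by omega)
        have hA₂ : ∑ i, A₂ i = ∑ i, B i := by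
          have := hAB
          rw [hA, sum_apply_add] at this
          omega
        obtain ⟨L, hL, hLs⟩ := PiL_PiLs A₂ B hA₂
        have h := (key n (xm β) (ym β) (p_mem hβ) (hdD hβ hn1) L).1
        rw [hL, hLs] at h
        have hid : SP A B = xm β * (xm A₂ * ym B) + ym β * (xm B * ym A₂) := by
          rw [SP, hA, xm_add, ym_add]; ring
        rw [hid]
        exact h
    ·
        intro A B hAB
        have hAB' : ∑ i, A i = (∑ i, B i) + k * n + n + n := by
          rw [hAB]; ring
        have hkn : n ≤ (∑ i, A i) - ∑ i, B i := by omega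
        obtain ⟨β, A₂, hA, hβ⟩ := exists_split (A := A) (t := n) (by omega)
        have hsums : ∑ i, A i = (∑ i, A₂ i) + n := by
          rw [hA, sum_apply_add]; omega
        have h1 : SP A₂ B ∈ AD n m := by
          refine ih (k+1) (by omega) A₂ B ?_
          have hy : (k+1) * n = k * n + n := by ring
          omega
        have h2 : SP A₂ (B + β) ∈ AD n m := by
          refine ih k (by omega) A₂ (B + β) ?_
          rw [sum_apply_add]
          omega
        have hid : SP A B = pPoly β * SP A₂ B - SP A₂ (B + β) := by
          rw [hA, SP, SP, SP, pPoly_eq, xm_add, ym_add, xm_add, ym_add]; ring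
        rw [hid]
        exact sub_mem (mul_mem (p_mem hβ) h1) h2

lemma SP_mem_modEq {n : ℕ} (hn1 : 1 ≤ n) {A B : Fin m →₀ ℕ}
    (h : (∑ i, A i) % n = (∑ i, B i) % n) : SP A B ∈ AD n m := by
  rcases le_total (∑ i, B i) (∑ i, A i) with hle | hle
  · obtain ⟨k, hk⟩ : ∃ k, (∑ i, A i) - (∑ i, B i) = n * k := by
      have : (∑ i, B i) ≡ (∑ i, A i) [MOD n] := h.symm
      exact (Nat.modEq_iff_dvd' hle).mp this
    exact SP_mem hn1 k A B (by rw [Nat.mul_comm k n]; omega)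
  · obtain ⟨k, hk⟩ : ∃ k, (∑ i, B i) - (∑ i, A i) = n * k := by
      have : (∑ i, A i) ≡ (∑ i, B i) [MOD n] := h
      exact (Nat.modEq_iff_dvd' hle).mp this
    rw [SP_comm]
    exact SP_mem hn1 k B A (by rw [Nat.mul_comm k n]; omega)

lemma actG_comp (g h : Matrix (Fin 2) (Fin 2) ℂ) (f : PolyVm m) :
    actG g (actG h f) = actG (h * g) f := by
  have hcomp : (actG (m := m) g).comp (actG h) = actG (h * g) := by
    apply MvPolynomial.algHom_ext
    intro p
    simp only [AlgHom.comp_apply, actG, aeval_X, map_sum, map_smul]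
    simp only [Finset.smul_sum, smul_smul, Matrix.mul_apply, Finset.sum_smul]
    rw [Finset.sum_comm]
  calc actG g (actG h f) = ((actG (m := m) g).comp (actG h)) f := rfl
    _ = actG (h * g) f := by rw [hcomp]

lemma actG_one (f : PolyVm m) : actG 1 f = f := by
  have h1 : actG (m := m) (1 : Matrix (Fin 2) (Fin 2) ℂ) = AlgHom.id ℂ _ := by
    apply MvPolynomial.algHom_ext
    intro p
    simp [actG, Matrix.one_apply, ite_smul]
  rw [h1]; rfl

lemma mem_invAlg_iff {S : Set (Matrix (Fin 2) (Fin 2) ℂ)} {f : PolyVm m} :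
    f ∈ invAlg m S ↔ ∀ g ∈ S, actG g f = f := by
  constructor
  · exact fun hf g hg => hf g (Submonoid.subset_closure hg)
  · intro hf g hg
    induction hg using Submonoid.closure_induction with
    | mem x hx => exact hf x hx
    | one => exact actG_one f
    | mul x y hx hy ihx ihy =>
        rw [← actG_comp y x f, ihx, ihy]

lemma actG_d_X0 (ω : ℂ) (i : Fin m) : actG (dMat ω) (X (0, i)) = C ω * X (0, i) := by
  rw [actG, aeval_X, Fin.sum_univ_two]
  simp [dMat, smul_eq_C_mul]

lemma actG_d_X1 (ω : ℂ) (i : Fin m) : actG (dMat ω) (X (1, i)) = C ω⁻¹ * X (1, i) := by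
  rw [actG, aeval_X, Fin.sum_univ_two]
  simp [dMat, smul_eq_C_mul]

lemma actG_s_X0 (i : Fin m) : actG sMat (X (0, i)) = X (1, i) := by
  rw [actG, aeval_X, Fin.sum_univ_two]
  simp [sMat]

lemma actG_s_X1 (i : Fin m) : actG sMat (X (1, i)) = X (0, i) := by
  rw [actG, aeval_X, Fin.sum_univ_two]
  simp [sMat]

lemma prod_C_pow (c : ℂ) (β : Fin m →₀ ℕ) :
    (∏ i, (C c : PolyVm m) ^ β i) = C (c ^ ∑ i, β i) := by
  rw [← Finset.prod_pow_eq_pow_sum, map_prod]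
  simp only [C_pow]

lemma actG_d_xm (ω : ℂ) (β : Fin m →₀ ℕ) :
    actG (dMat ω) (xm β) = C (ω ^ (∑ i, β i)) * xm β := by
  rw [xm, map_prod]
  simp only [map_pow, actG_d_X0, mul_pow]
  rw [Finset.prod_mul_distrib, prod_C_pow, C_pow]

lemma actG_d_ym (ω : ℂ) (β : Fin m →₀ ℕ) :
    actG (dMat ω) (ym β) = C (ω⁻¹ ^ (∑ i, β i)) * ym β := by
  rw [ym, map_prod]
  simp only [map_pow, actG_d_X1, mul_pow]
  rw [Finset.prod_mul_distrib, prod_C_pow, C_pow]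

lemma actG_s_xm (β : Fin m →₀ ℕ) : actG sMat (xm β) = ym β := by
  rw [xm, ym, map_prod]
  simp only [map_pow, actG_s_X0]

lemma actG_s_ym (β : Fin m →₀ ℕ) : actG sMat (ym β) = xm β := by
  rw [xm, ym, map_prod]
  simp only [map_pow, actG_s_X1]

lemma actG_d_q (ω : ℂ) (hω0 : ω ≠ 0) (α : Fin m →₀ ℕ) :
    actG (dMat ω) (qPoly α) = qPoly α := by
  rw [qPoly, map_smul, map_sum]
  congr 1
  refine Finset.sum_congr rfl fun ij _ => ?_
  rw [map_mul, actG_d_X0, actG_d_X1]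
  have h1 : (C ω : PolyVm m) * C ω⁻¹ = 1 := by
    rw [← C_mul, mul_inv_cancel₀ hω0, C_1]
  calc (C ω * X (0,ij.1) * (C ω⁻¹ * X (1,ij.2)) : PolyVm m)
      = (C ω * C ω⁻¹) * (X (0,ij.1) * X (1,ij.2)) := by ring
    _ = X (0,ij.1) * X (1,ij.2) := by rw [h1, one_mul]

lemma actG_s_q (α : Fin m →₀ ℕ) : actG sMat (qPoly α) = qPoly α := by
  rw [qPoly, map_smul, map_sum]
  congr 1
  have hterm : ∀ ij ∈ (Finset.univ.filter fun ij : Fin m × Fin m =>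
      Finsupp.single ij.1 1 + Finsupp.single ij.2 1 = α),
      actG sMat (X (0,ij.1) * X (1,ij.2)) = X (0,ij.2) * X (1,ij.1) := by
    intro ij _
    rw [map_mul, actG_s_X0, actG_s_X1]; ring
  rw [Finset.sum_congr rfl hterm]
  refine Finset.sum_equiv (Equiv.prodComm (Fin m) (Fin m)) (fun ij => ?_) (fun ij _ => rfl)
  simp only [Finset.mem_filter, Finset.mem_univ, true_and, Equiv.prodComm_apply,
    Prod.fst_swap, Prod.snd_swap]
  rw [add_comm]

lemma actG_d_p (ω : ℂ) {n : ℕ} (hωn : ω ^ n = 1) {β : Fin m →₀ ℕ} (hβ : ∑ i, β i = n) :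
    actG (dMat ω) (pPoly β) = pPoly β := by
  rw [pPoly_eq, map_add, actG_d_xm, actG_d_ym, hβ, hωn, inv_pow, hωn, inv_one, C_1, one_mul,
    one_mul]

lemma actG_s_p (β : Fin m →₀ ℕ) : actG sMat (pPoly β) = pPoly β := by
  rw [pPoly_eq, map_add, actG_s_xm, actG_s_ym, add_comm]

lemma genSet_subset_inv {n : ℕ} (ω : ℂ) (hω0 : ω ≠ 0) (hωn : ω ^ n = 1) :
    genSet n m ⊆ (dihedralInv m ω : Set (PolyVm m)) := by
  rintro f (⟨α, hα, rfl⟩ | ⟨β, hβ, rfl⟩) <;>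
  · rw [SetLike.mem_coe, dihedralInv, mem_invAlg_iff]
    rintro g (rfl | rfl)
    · first
      | exact actG_d_q ω hω0 α
      | exact actG_d_p ω hωn hβ
    · first
      | exact actG_s_q α
      | exact actG_s_p β

/-- `x`-row of an exponent -/
def rowA (v : (Fin 2 × Fin m) →₀ ℕ) : Fin m →₀ ℕ := fsOf fun i => v (0, i)
/-- `y`-row of an exponent -/
def rowB (v : (Fin 2 × Fin m) →₀ ℕ) : Fin m →₀ ℕ := fsOf fun i => v (1, i)

lemma monomial_one_eq (v : (Fin 2 × Fin m) →₀ ℕ) :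
    (monomial v 1 : PolyVm m) = xm (rowA v) * ym (rowB v) := by
  rw [monomial_eq, C_1, one_mul, Finsupp.prod_pow, Fintype.prod_prod_type, Fin.prod_univ_two]
  rfl

lemma actG_C (g : Matrix (Fin 2) (Fin 2) ℂ) (c : ℂ) : actG (m := m) g (C c) = C c := by
  have h := (actG (m := m) g).commutes c
  rwa [MvPolynomial.algebraMap_eq] at h

lemma actG_d_monomial (ω : ℂ) (v : (Fin 2 × Fin m) →₀ ℕ) (c : ℂ) :
    actG (dMat ω) (monomial v c)
      = C (ω ^ (∑ i, rowA v i) * ω⁻¹ ^ (∑ i, rowB v i)) * monomial v c := by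
  have hm : (monomial v c : PolyVm m) = C c * (xm (rowA v) * ym (rowB v)) := by
    rw [← monomial_one_eq, C_mul_monomial, mul_one]
  rw [hm, map_mul, map_mul, actG_C, actG_d_xm, actG_d_ym, C_mul]
  ring

lemma coeff_actG_d (ω : ℂ) (f : PolyVm m) (v : (Fin 2 × Fin m) →₀ ℕ) :
    coeff v (actG (dMat ω) f)
      = (ω ^ (∑ i, rowA v i) * ω⁻¹ ^ (∑ i, rowB v i)) * coeff v f := by
  conv_lhs => rw [f.as_sum, map_sum]
  simp only [actG_d_monomial]
  rw [coeff_sum]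
  simp only [coeff_C_mul, coeff_monomial]
  rw [Finset.sum_eq_single v
    (fun u _ hu => by
      rw [if_neg (by
        intro h
        exact hu (by
          have : rowA u = rowA v ∧ rowB u = rowB v := ⟨by rw [h], by rw [h]⟩
          exact h))]
      ring)
    (fun hv => by
      rw [if_pos rfl, MvPolynomial.notMem_support_iff.mp hv, mul_zero])]
  rw [if_pos rfl]

lemma rows_modEq {n : ℕ} (ω : ℂ) (hω : IsPrimitiveRoot ω n) (hn : n ≠ 0) {f : PolyVm m}
    (hf : actG (dMat ω) f = f) {v : (Fin 2 × Fin m) →₀ ℕ} (hv : coeff v f ≠ 0) :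
    (∑ i, rowA v i) % n = (∑ i, rowB v i) % n := by
  have hω0 : ω ≠ 0 := by
    intro h
    have hpow := hω.pow_eq_one
    rw [h, zero_pow hn] at hpow
    exact zero_ne_one hpow
  have h := coeff_actG_d ω f v
  rw [hf] at h
  have hχ : ω ^ (∑ i, rowA v i) * ω⁻¹ ^ (∑ i, rowB v i) = 1 :=
    mul_right_cancel₀ hv (by rw [← h, one_mul])
  have hON : ω ^ (∑ i, rowA v i) = ω ^ (∑ i, rowB v i) := by
    rw [inv_pow] at hχ
    have h2 := congrArg (· * ω ^ (∑ i, rowB v i)) hχ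
    simpa [mul_assoc, inv_mul_cancel₀ (pow_ne_zero _ hω0)] using h2
  have key : ∀ a b : ℕ, b ≤ a → ω ^ a = ω ^ b → a % n = b % n := by
    intro a b hle hab
    have hdvd : n ∣ a - b := by
      apply (hω.pow_eq_one_iff_dvd _).mp
      have h3 : ω ^ (a - b) * ω ^ b = 1 * ω ^ b := by
        rw [← pow_add, Nat.sub_add_cancel hle, one_mul, hab]
      exact mul_right_cancel₀ (pow_ne_zero _ hω0) h3
    exact ((Nat.modEq_iff_dvd' hle).mpr hdvd).symm
  rcases le_total (∑ i, rowB v i) (∑ i, rowA v i) with hle | hle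
  · exact key _ _ hle hON
  · exact (key _ _ hle hON.symm).symm

lemma inv_decomp {f : PolyVm m} (hs : actG sMat f = f) :
    f = (2:ℂ)⁻¹ • ∑ v ∈ f.support, C (coeff v f) * SP (rowA v) (rowB v) := by
  rw [eq_comm, inv_smul_eq_iff₀ two_ne_zero, two_smul]
  refine Eq.symm ?_
  have h1 : f + actG sMat f
      = ∑ v ∈ f.support, (monomial v (coeff v f) + actG sMat (monomial v (coeff v f))) := by
    rw [Finset.sum_add_distrib, ← map_sum, ← f.as_sum]
  calc f + f = f + actG sMat f := by rw [hs]
    _ = ∑ v ∈ f.support, (monomial v (coeff v f) + actG sMat (monomial v (coeff v f))) := h1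
    _ = ∑ v ∈ f.support, C (coeff v f) * SP (rowA v) (rowB v) := by
        refine Finset.sum_congr rfl fun v _ => ?_
        have hm : (monomial v (coeff v f) : PolyVm m)
            = C (coeff v f) * (xm (rowA v) * ym (rowB v)) := by
          rw [← monomial_one_eq, C_mul_monomial, mul_one]
        rw [hm, map_mul, map_mul, actG_C, actG_s_xm, actG_s_ym, SP]
        ring

lemma inv_le_AD {n : ℕ} (hn1 : 1 ≤ n) (ω : ℂ) (hω : IsPrimitiveRoot ω n) :
    (dihedralInv m ω) ≤ AD n m := by
  intro f hf
  have hd : actG (dMat ω) f = f := hf _ (Submonoid.subset_closure (Set.mem_insert _ _))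
  have hs : actG sMat f = f := hf _ (Submonoid.subset_closure (Set.mem_insert_of_mem _ rfl))
  rw [inv_decomp hs]
  refine Subalgebra.smul_mem _ (sum_mem fun v hv => ?_) _
  have hmod := rows_modEq ω hω (by omega) hd (MvPolynomial.mem_support_iff.mp hv)
  refine mul_mem ?_ (SP_mem_modEq hn1 hmod)
  have hC := Subalgebra.algebraMap_mem (AD n m) (coeff v f)
  rwa [MvPolynomial.algebraMap_eq] at hC

lemma fin2_01 : (0 : Fin 2) ≠ 1 := by decide

lemma prod01_ne {a b : Fin m} : ((0:Fin 2), a) ≠ ((1:Fin 2), b) :=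
  fun h => fin2_01 (congrArg Prod.fst h)

lemma prod10_ne {a b : Fin m} : ((1:Fin 2), a) ≠ ((0:Fin 2), b) :=
  fun h => fin2_01 (congrArg Prod.fst h).symm

lemma degree_univ (v : (Fin 2 × Fin m) →₀ ℕ) : v.degree = ∑ p, v p :=
  Finset.sum_subset (Finset.subset_univ _)
    (fun p _ hp => Finsupp.notMem_support_iff.mp hp)

lemma sum_univ_prod (v : (Fin 2 × Fin m) →₀ ℕ) :
    ∑ p, v p = (∑ i, v (0,i)) + ∑ i, v (1,i) := by
  rw [Fintype.sum_prod_type, Fin.sum_univ_two]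

lemma qPoly_hom (α : Fin m →₀ ℕ) : (qPoly α).IsHomogeneous 2 := by
  rw [qPoly, smul_eq_C_mul]
  apply MvPolynomial.IsHomogeneous.C_mul
  apply MvPolynomial.IsHomogeneous.sum
  intro ij _
  exact (isHomogeneous_X ℂ ((0 : Fin 2), ij.1)).mul (isHomogeneous_X ℂ ((1 : Fin 2), ij.2))

lemma xm_hom (β : Fin m →₀ ℕ) : (xm β).IsHomogeneous (∑ i, β i) := by
  rw [xm]; exact MvPolynomial.IsHomogeneous.prod _ _ _ fun i _ => isHomogeneous_X_pow _ _

lemma ym_hom (β : Fin m →₀ ℕ) : (ym β).IsHomogeneous (∑ i, β i) := by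
  rw [ym]; exact MvPolynomial.IsHomogeneous.prod _ _ _ fun i _ => isHomogeneous_X_pow _ _

lemma pPoly_hom (β : Fin m →₀ ℕ) : (pPoly β).IsHomogeneous (∑ i, β i) := by
  rw [pPoly_eq]; exact (xm_hom β).add (ym_hom β)

lemma exists_pair {α : Fin m →₀ ℕ} (hα : ∑ i, α i = 2) :
    ∃ i j, α = Finsupp.single i 1 + Finsupp.single j 1 := by
  obtain ⟨α', j, hα', hs'⟩ := exists_cons (t := 1) hα
  obtain ⟨α'', i, hα'', hs''⟩ := exists_cons (t := 0) hs'
  have hz : α'' = 0 := by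
    ext k
    have h0 := (Finset.sum_eq_zero_iff).mp hs'' k (Finset.mem_univ k)
    simpa using h0
  exact ⟨i, j, by rw [hα', hα'', hz, zero_add]⟩

lemma X0X1_monomial (a b : Fin m) : (X (0,a) * X (1,b) : PolyVm m)
    = monomial (Finsupp.single ((0 : Fin 2), a) 1 + Finsupp.single ((1 : Fin 2), b) 1) 1 := by
  rw [X, X, monomial_mul, one_mul]

lemma exp_pair_inj {a b i j : Fin m}
    (h : Finsupp.single ((0:Fin 2), a) 1 + Finsupp.single ((1:Fin 2), b) 1
       = Finsupp.single ((0:Fin 2), i) 1 + Finsupp.single ((1:Fin 2), j) 1) :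
    a = i ∧ b = j := by
  rw [Finsupp.single_add_single_eq_single_add_single one_ne_zero one_ne_zero] at h
  rcases h with ⟨h1, h2⟩ | ⟨-, h1, -⟩ | ⟨h1, -⟩
  · exact ⟨congrArg Prod.snd h1, congrArg Prod.snd h2⟩
  · exact absurd h1 prod01_ne
  · exact absurd h1 (by norm_num)

lemma uq_ne_zero (i j : Fin m) :
    Finsupp.single ((0:Fin 2),i) 1 + Finsupp.single ((1:Fin 2),j) 1 ≠ 0 := by
  intro h
  have h2 : (Finsupp.single ((0:Fin 2),i) 1 + Finsupp.single ((1:Fin 2),j) 1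
      : (Fin 2 × Fin m) →₀ ℕ) ((0:Fin 2), i) = (0 : (Fin 2 × Fin m) →₀ ℕ) ((0:Fin 2), i) := by
    rw [h]
  rw [Finsupp.add_apply, Finsupp.single_apply, if_pos rfl,
    Finsupp.single_apply, if_neg (fun hc => prod10_ne hc), Finsupp.coe_zero, Pi.zero_apply] at h2
  omega

lemma degree_uq (i j : Fin m) :
    (Finsupp.single ((0:Fin 2),i) 1 + Finsupp.single ((1:Fin 2),j) 1).degree = 2 := by
  rw [degree_univ, sum_univ_prod]
  simp only [Finsupp.coe_add, Pi.add_apply, Finsupp.single_apply]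
  rw [Finset.sum_add_distrib, Finset.sum_add_distrib]
  have h1 : ∑ k : Fin m, (if ((0:Fin 2),i) = ((0:Fin 2),k) then 1 else 0) = 1 := by
    rw [Finset.sum_eq_single i (fun k _ hk => by
      rw [if_neg (fun hc => hk (congrArg Prod.snd hc).symm)]) (by simp)]
    rw [if_pos rfl]
  have h2 : ∑ k : Fin m, (if ((1:Fin 2),j) = ((1:Fin 2),k) then 1 else 0) = 1 := by
    rw [Finset.sum_eq_single j (fun k _ hk => by
      rw [if_neg (fun hc => hk (congrArg Prod.snd hc).symm)]) (by simp)]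
    rw [if_pos rfl]
  have h3 : ∑ k : Fin m, (if ((0:Fin 2),i) = ((1:Fin 2),k) then (1:ℕ) else 0) = 0 :=
    Finset.sum_eq_zero fun k _ => by
      rw [if_neg (fun hc => prod01_ne hc)]
  have h4 : ∑ k : Fin m, (if ((1:Fin 2),j) = ((0:Fin 2),k) then (1:ℕ) else 0) = 0 :=
    Finset.sum_eq_zero fun k _ => by
      rw [if_neg (fun hc => prod10_ne hc)]
  omega

lemma coeff_uq_qPoly {i j : Fin m} {α' : Fin m →₀ ℕ}
    (h0 : coeff (Finsupp.single ((0:Fin 2),i) 1 + Finsupp.single ((1:Fin 2),j) 1)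
      (qPoly α') ≠ 0) :
    α' = Finsupp.single i 1 + Finsupp.single j 1 := by
  rw [qPoly, coeff_smul, smul_eq_mul] at h0
  have h1 := right_ne_zero_of_mul h0
  rw [MvPolynomial.coeff_sum] at h1
  obtain ⟨ij, hijF, hne⟩ := Finset.exists_ne_zero_of_sum_ne_zero h1
  rw [X0X1_monomial, coeff_monomial] at hne
  rw [Finset.mem_filter] at hijF
  by_cases hcond : Finsupp.single ((0:Fin 2),ij.1) 1 + Finsupp.single ((1:Fin 2),ij.2) 1
      = Finsupp.single ((0:Fin 2),i) 1 + Finsupp.single ((1:Fin 2),j) 1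
  · obtain ⟨ha, hb⟩ := exp_pair_inj hcond
    rw [← hijF.2, ha, hb]
  · exact absurd (if_neg hcond) (fun h => hne (h ▸ rfl))

lemma coeff_uq_q_self (i j : Fin m) :
    coeff (Finsupp.single ((0:Fin 2),i) 1 + Finsupp.single ((1:Fin 2),j) 1)
      (qPoly (Finsupp.single i 1 + Finsupp.single j 1)) ≠ 0 := by
  rw [qPoly, coeff_smul, smul_eq_mul]
  have hijF : (i,j) ∈ (Finset.univ.filter fun ij : Fin m × Fin m =>
      Finsupp.single ij.1 1 + Finsupp.single ij.2 1
        = Finsupp.single i 1 + Finsupp.single j 1) := by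
    simp
  have hsum : ∑ ij ∈ (Finset.univ.filter fun ij : Fin m × Fin m =>
      Finsupp.single ij.1 1 + Finsupp.single ij.2 1
        = Finsupp.single i 1 + Finsupp.single j 1),
      coeff (Finsupp.single ((0:Fin 2),i) 1 + Finsupp.single ((1:Fin 2),j) 1)
        (X (0,ij.1) * X (1,ij.2) : PolyVm m) = 1 := by
    rw [Finset.sum_eq_single (i,j)
      (fun ab _ hab => by
        rw [X0X1_monomial, coeff_monomial, if_neg]
        intro hc
        obtain ⟨ha, hb⟩ := exp_pair_inj hc
        exact hab (Prod.ext ha hb))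
      (fun h => absurd hijF h)]
    rw [X0X1_monomial, coeff_monomial, if_pos rfl]
  rw [MvPolynomial.coeff_sum, hsum, mul_one]
  exact inv_ne_zero (Nat.cast_ne_zero.mpr (Finset.card_ne_zero_of_mem hijF))

lemma q_notmem {n : ℕ} (hn : 3 ≤ n) {α : Fin m →₀ ℕ} (hα : ∑ i, α i = 2) :
    qPoly α ∉ Algebra.adjoin ℂ (genSet n m \ {qPoly α}) := by
  intro hmem
  obtain ⟨i, j, rfl⟩ := exists_pair hα
  set u : (Fin 2 × Fin m) →₀ ℕ :=
    Finsupp.single ((0:Fin 2),i) 1 + Finsupp.single ((1:Fin 2),j) 1 with hu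
  have hcl : ∀ g ∈ Submonoid.closure (genSet n m \ {qPoly (Finsupp.single i 1 + Finsupp.single j 1)}),
      coeff u g = 0 := by
    intro g hg
    have hP : ∃ d, g.IsHomogeneous d ∧ (g = 1 ∨ (2 ≤ d ∧ coeff u g = 0)) := by
      induction hg using Submonoid.closure_induction with
      | mem s hs =>
          obtain ⟨hset, hne⟩ := hs
          rw [Set.mem_singleton_iff] at hne
          rcases hset with ⟨α', hα', rfl⟩ | ⟨β', hβ', rfl⟩
          · refine ⟨2, qPoly_hom α', Or.inr ⟨le_refl 2, ?_⟩⟩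
            by_contra hc
            exact hne (by rw [coeff_uq_qPoly hc])
          · refine ⟨n, hβ' ▸ pPoly_hom β', Or.inr ⟨by omega, ?_⟩⟩
            exact (hβ' ▸ pPoly_hom β').coeff_eq_zero (by rw [degree_uq]; omega)
      | one => exact ⟨0, isHomogeneous_one _ _, Or.inl rfl⟩
      | mul x y hx hy ihx ihy =>
          obtain ⟨d1, h1, c1⟩ := ihx
          obtain ⟨d2, h2, c2⟩ := ihy
          rcases c1 with rfl | ⟨hd1, hc1⟩
          · rw [one_mul]; exact ⟨d2, h2, c2⟩
          rcases c2 with rfl | ⟨hd2, hc2⟩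
          · rw [mul_one]; exact ⟨d1, h1, Or.inr ⟨hd1, hc1⟩⟩
          refine ⟨d1 + d2, h1.mul h2, Or.inr ⟨by omega, ?_⟩⟩
          exact (h1.mul h2).coeff_eq_zero (by rw [degree_uq]; omega)
    obtain ⟨d, hhom, hcase⟩ := hP
    rcases hcase with rfl | ⟨-, hc⟩
    · rw [MvPolynomial.coeff_one, if_neg (fun h => uq_ne_zero i j h.symm)]
    · exact hc
  have hspan : qPoly (Finsupp.single i 1 + Finsupp.single j 1) ∈
      Submodule.span ℂ ((Submonoid.closure
        (genSet n m \ {qPoly (Finsupp.single i 1 + Finsupp.single j 1)}) : Submonoid _) :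
          Set (PolyVm m)) := by
    rw [← Algebra.adjoin_eq_span]
    exact hmem
  have hzero : coeff u (qPoly (Finsupp.single i 1 + Finsupp.single j 1)) = 0 := by
    refine Submodule.span_induction (p := fun x _ => coeff u x = 0)
      (fun g hg => hcl g hg) (coeff_zero u) ?_ ?_ hspan
    · intro a b _ _ ha hb
      rw [coeff_add, ha, hb, add_zero]
    · intro c a _ ha
      rw [coeff_smul, ha, smul_zero]
  exact coeff_uq_q_self i j hzero

lemma map0_inj : Function.Injective (fun i : Fin m => ((0:Fin 2), i)) :=
  fun _ _ h => congrArg Prod.snd h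

lemma xm_single_pow (a : Fin m) (b : ℕ) : xm (Finsupp.single a b) = X ((0:Fin 2), a) ^ b := by
  rw [xm]
  rw [Finset.prod_eq_single a (fun k _ hk => by
    rw [Finsupp.single_apply, if_neg (Ne.symm hk), pow_zero]) (by simp)]
  rw [Finsupp.single_apply, if_pos rfl]

lemma ym_single_pow (a : Fin m) (b : ℕ) : ym (Finsupp.single a b) = X ((1:Fin 2), a) ^ b := by
  rw [ym]
  rw [Finset.prod_eq_single a (fun k _ hk => by
    rw [Finsupp.single_apply, if_neg (Ne.symm hk), pow_zero]) (by simp)]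
  rw [Finsupp.single_apply, if_pos rfl]

lemma xm_monomial (β : Fin m →₀ ℕ) :
    xm β = monomial (β.mapDomain fun i => ((0:Fin 2), i)) 1 := by
  induction β using Finsupp.induction with
  | zero => rw [xm_zero, Finsupp.mapDomain_zero, monomial_zero', C_1]
  | single_add a b f _ _ ih =>
      rw [xm_add, Finsupp.mapDomain_add, Finsupp.mapDomain_single, ih, xm_single_pow,
        X_pow_eq_monomial, monomial_mul, one_mul]

lemma ym_monomial (β : Fin m →₀ ℕ) :
    ym β = monomial (β.mapDomain fun i => ((1:Fin 2), i)) 1 := by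
  induction β using Finsupp.induction with
  | zero => rw [ym_zero, Finsupp.mapDomain_zero, monomial_zero', C_1]
  | single_add a b f _ _ ih =>
      rw [ym_add, Finsupp.mapDomain_add, Finsupp.mapDomain_single, ih, ym_single_pow,
        X_pow_eq_monomial, monomial_mul, one_mul]

lemma map1_apply0 (β : Fin m →₀ ℕ) (i : Fin m) :
    (β.mapDomain fun k => ((1:Fin 2), k)) ((0:Fin 2), i) = 0 :=
  Finsupp.mapDomain_notin_range _ _ (by rintro ⟨k, hk⟩; exact prod10_ne hk)

lemma map0_apply1 (β : Fin m →₀ ℕ) (i : Fin m) :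
    (β.mapDomain fun k => ((0:Fin 2), k)) ((1:Fin 2), i) = 0 :=
  Finsupp.mapDomain_notin_range _ _ (by rintro ⟨k, hk⟩; exact prod01_ne hk)

lemma coeff_up_p_self {β : Fin m →₀ ℕ} (hβ0 : β ≠ 0) :
    coeff (β.mapDomain fun i => ((0:Fin 2), i)) (pPoly β) = 1 := by
  rw [pPoly_eq, xm_monomial, ym_monomial, coeff_add, coeff_monomial, if_pos rfl,
    coeff_monomial, if_neg, add_zero]
  intro h
  apply hβ0
  ext i
  have h1 : (β.mapDomain fun k => ((1:Fin 2), k)) ((0:Fin 2), i)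
      = (β.mapDomain fun k => ((0:Fin 2), k)) ((0:Fin 2), i) := by rw [h]
  rw [map1_apply0, Finsupp.mapDomain_apply map0_inj] at h1
  exact h1.symm

lemma coeff_up_p_other {n : ℕ} (hn1 : 1 ≤ n) {β β' : Fin m →₀ ℕ} (hβ : ∑ i, β i = n)
    (hne : β' ≠ β) :
    coeff (β.mapDomain fun i => ((0:Fin 2), i)) (pPoly β') = 0 := by
  rw [pPoly_eq, xm_monomial, ym_monomial, coeff_add, coeff_monomial, if_neg, coeff_monomial,
    if_neg, add_zero]
  · intro h
    have hz : ∀ i, β i = 0 := by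
      intro i
      have h1 : (β'.mapDomain fun k => ((1:Fin 2), k)) ((0:Fin 2), i)
          = (β.mapDomain fun k => ((0:Fin 2), k)) ((0:Fin 2), i) := by rw [h]
      rw [map1_apply0, Finsupp.mapDomain_apply map0_inj] at h1
      exact h1.symm
    have : ∑ i, β i = 0 := Finset.sum_eq_zero fun i _ => hz i
    omega
  · intro h
    exact hne (Finsupp.mapDomain_injective map0_inj h)

lemma NPX_qPoly (α' : Fin m →₀ ℕ) (w : (Fin 2 × Fin m) →₀ ℕ)
    (hw : ∀ i, w ((1:Fin 2),i) = 0) : coeff w (qPoly α') = 0 := by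
  rw [qPoly, coeff_smul, MvPolynomial.coeff_sum]
  rw [Finset.sum_eq_zero, smul_zero]
  intro ij _
  rw [X0X1_monomial, coeff_monomial, if_neg]
  intro h
  have h2 : (Finsupp.single ((0:Fin 2),ij.1) 1 + Finsupp.single ((1:Fin 2),ij.2) 1
      : (Fin 2 × Fin m) →₀ ℕ) ((1:Fin 2), ij.2) = w ((1:Fin 2), ij.2) := by rw [h]
  rw [Finsupp.add_apply, Finsupp.single_apply, if_neg (fun hc => prod01_ne hc),
    Finsupp.single_apply, if_pos rfl, hw] at h2
  omega

lemma NPX_mul_left {g h : PolyVm m}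
    (hg : ∀ w : (Fin 2 × Fin m) →₀ ℕ, (∀ i, w ((1:Fin 2),i) = 0) → coeff w g = 0)
    (w : (Fin 2 × Fin m) →₀ ℕ) (hw : ∀ i, w ((1:Fin 2),i) = 0) : coeff w (g * h) = 0 := by
  rw [coeff_mul]
  apply Finset.sum_eq_zero
  intro x hx
  rw [Finset.HasAntidiagonal.mem_antidiagonal] at hx
  have hx1 : ∀ i, x.1 ((1:Fin 2), i) = 0 := by
    intro i
    have h2 : x.1 ((1:Fin 2), i) + x.2 ((1:Fin 2), i) = w ((1:Fin 2), i) := by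
      rw [← Finsupp.add_apply, hx]
    rw [hw] at h2
    omega
  rw [hg x.1 hx1, zero_mul]

lemma NPX_mul_right {g h : PolyVm m}
    (hh : ∀ w : (Fin 2 × Fin m) →₀ ℕ, (∀ i, w ((1:Fin 2),i) = 0) → coeff w h = 0)
    (w : (Fin 2 × Fin m) →₀ ℕ) (hw : ∀ i, w ((1:Fin 2),i) = 0) : coeff w (g * h) = 0 := by
  rw [coeff_mul]
  apply Finset.sum_eq_zero
  intro x hx
  rw [Finset.HasAntidiagonal.mem_antidiagonal] at hx
  have hx2 : ∀ i, x.2 ((1:Fin 2), i) = 0 := by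
    intro i
    have h2 : x.1 ((1:Fin 2), i) + x.2 ((1:Fin 2), i) = w ((1:Fin 2), i) := by
      rw [← Finsupp.add_apply, hx]
    rw [hw] at h2
    omega
  rw [hh x.2 hx2, mul_zero]

lemma degree_up (β : Fin m →₀ ℕ) :
    (β.mapDomain fun i => ((0:Fin 2), i)).degree = ∑ i, β i := by
  rw [degree_univ, sum_univ_prod]
  have h0 : ∀ i, (β.mapDomain fun k => ((0:Fin 2), k)) ((0:Fin 2),i) = β i := fun i =>
    Finsupp.mapDomain_apply map0_inj β i
  have h1 : ∀ i, (β.mapDomain fun k => ((0:Fin 2), k)) ((1:Fin 2),i) = 0 := map0_apply1 β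
  rw [Finset.sum_congr rfl fun i _ => h0 i, Finset.sum_congr rfl fun i _ => h1 i]
  simp

lemma p_notmem {n : ℕ} (hn : 3 ≤ n) {β : Fin m →₀ ℕ} (hβ : ∑ i, β i = n) :
    pPoly β ∉ Algebra.adjoin ℂ (genSet n m \ {pPoly β}) := by
  intro hmem
  have hβ0 : β ≠ 0 := by
    intro h
    rw [h] at hβ
    simp at hβ
    omega
  have hu0 : (β.mapDomain fun i => ((0:Fin 2), i)) ≠ 0 := by
    intro h
    apply hβ0
    ext i
    have h1 := congrArg (fun v : (Fin 2 × Fin m) →₀ ℕ => v ((0:Fin 2), i)) h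
    simp only [Finsupp.mapDomain_apply map0_inj, Finsupp.coe_zero, Pi.zero_apply] at h1
    exact h1
  set u : (Fin 2 × Fin m) →₀ ℕ := β.mapDomain fun i => ((0:Fin 2), i) with hu
  have hcl : ∀ g ∈ Submonoid.closure (genSet n m \ {pPoly β}), coeff u g = 0 := by
    intro g hg
    have hP : ∃ d, g.IsHomogeneous d ∧
        ((∀ w : (Fin 2 × Fin m) →₀ ℕ, (∀ i, w ((1:Fin 2),i) = 0) → coeff w g = 0)
          ∨ g = 1 ∨ (n ≤ d ∧ coeff u g = 0)) := by
      induction hg using Submonoid.closure_induction with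
      | mem s hs =>
          obtain ⟨hset, hne⟩ := hs
          rw [Set.mem_singleton_iff] at hne
          rcases hset with ⟨α', hα', rfl⟩ | ⟨β', hβ', rfl⟩
          · exact ⟨2, qPoly_hom α', Or.inl (NPX_qPoly α')⟩
          · refine ⟨n, hβ' ▸ pPoly_hom β', Or.inr (Or.inr ⟨le_refl n, ?_⟩)⟩
            exact coeff_up_p_other (by omega) hβ (fun h => hne (by rw [h]))
      | one => exact ⟨0, isHomogeneous_one _ _, Or.inr (Or.inl rfl)⟩
      | mul x y hx hy ihx ihy =>
          obtain ⟨d1, h1, c1⟩ := ihx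
          obtain ⟨d2, h2, c2⟩ := ihy
          rcases c1 with hN1 | rfl | ⟨hd1, hc1⟩
          · exact ⟨d1+d2, h1.mul h2, Or.inl (NPX_mul_left hN1)⟩
          · rw [one_mul]; exact ⟨d2, h2, c2⟩
          · rcases c2 with hN2 | rfl | ⟨hd2, hc2⟩
            · exact ⟨d1+d2, h1.mul h2, Or.inl (NPX_mul_right hN2)⟩
            · rw [mul_one]; exact ⟨d1, h1, Or.inr (Or.inr ⟨hd1, hc1⟩)⟩
            · refine ⟨d1+d2, h1.mul h2, Or.inr (Or.inr ⟨by omega, ?_⟩)⟩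
              exact (h1.mul h2).coeff_eq_zero (by rw [hu, degree_up, hβ]; omega)
    obtain ⟨d, hhom, hcase⟩ := hP
    rcases hcase with hN | rfl | ⟨-, hc⟩
    · exact hN u (fun i => map0_apply1 β i)
    · rw [MvPolynomial.coeff_one, if_neg (fun h => hu0 h.symm)]
    · exact hc
  have hspan : pPoly β ∈ Submodule.span ℂ ((Submonoid.closure
      (genSet n m \ {pPoly β}) : Submonoid _) : Set (PolyVm m)) := by
    rw [← Algebra.adjoin_eq_span]
    exact hmem
  have hzero : coeff u (pPoly β) = 0 := by
    refine Submodule.span_induction (p := fun x _ => coeff u x = 0)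
      (fun g hg => hcl g hg) (coeff_zero u) ?_ ?_ hspan
    · intro a b _ _ ha hb
      rw [coeff_add, ha, hb, add_zero]
    · intro c a _ ha
      rw [coeff_smul, ha, smul_zero]
  rw [coeff_up_p_self hβ0] at hzero
  exact one_ne_zero hzero

lemma AD_eq_inv {n : ℕ} (hn : 3 ≤ n) (ω : ℂ) (hω : IsPrimitiveRoot ω n) :
    AD n m = dihedralInv m ω := by
  have hn0 : n ≠ 0 := by omega
  have hω0 : ω ≠ 0 := by
    intro h
    have hpow := hω.pow_eq_one
    rw [h, zero_pow hn0] at hpow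
    exact zero_ne_one hpow
  apply le_antisymm
  · rw [AD]
    exact Algebra.adjoin_le (genSet_subset_inv ω hω0 hω.pow_eq_one)
  · exact inv_le_AD (by omega) ω hω

end Dih

/-- **First Fundamental Theorem for the dihedral group** (Hunziker).
The polarizations of `q = xy` and `p = xⁿ + yⁿ` form a minimal homogeneous generating
system of the algebra `ℂ[V^m]^{D_{2n}}`: they generate it as a `ℂ`-algebra, and no
proper subset of them generates it. -/
theorem polarizations_minimally_generate_dihedral_invariants
    (n : ℕ) (hn : 3 ≤ n) (ω : ℂ) (hω : IsPrimitiveRoot ω n)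
    (m : ℕ) (hm : 1 ≤ m) :
    Algebra.adjoin ℂ (genSet n m) = dihedralInv m ω ∧
    ∀ T ⊆ genSet n m, Algebra.adjoin ℂ T = dihedralInv m ω → T = genSet n m := by
  constructor
  · exact Dih.AD_eq_inv hn ω hω
  · intro T hT hTeq
    apply Set.Subset.antisymm hT
    intro g hg
    by_contra hgT
    have hsub : T ⊆ genSet n m \ {g} := fun x hx =>
      ⟨hT hx, fun hxg => hgT (by rwa [Set.mem_singleton_iff.mp hxg] at hx)⟩
    have hgmem : g ∈ Algebra.adjoin ℂ (genSet n m \ {g}) := by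
      have h1 : g ∈ Dih.AD n m := Algebra.subset_adjoin hg
      rw [Dih.AD_eq_inv hn ω hω, ← hTeq] at h1
      exact Algebra.adjoin_mono hsub h1
    rcases hg with ⟨α, hα, rfl⟩ | ⟨β, hβ, rfl⟩
    · exact Dih.q_notmem hn hα hgmem
    · exact Dih.p_notmem hn hβ hgmem

end
end

section
/- For every integer m ≥ 1: every homogeneous polynomial of degree n+1 in ℂ[V^m] lies in the Hilbert ideal of D_{2n}, while not every homogeneous polynomial of degree n in ℂ[V^m] lies in the Hilbert ideal. (That is, the number τ_{D_{2n}}(V^m), the minimal positive integer k such that all homogeneous polynomials of degree k lie in the Hilbert ideal, equals n+1.) -/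
open MvPolynomial

noncomputable section

/-- The Hilbert ideal: the ideal of `ℂ[V^m]` generated by all homogeneous
`D_{2n}`-invariant polynomials of positive degree. -/
def hilbertIdeal (m : ℕ) (ω : ℂ) : Ideal (PolyVm m) :=
  Ideal.span {f | f ∈ dihedralInv m ω ∧ ∃ d, 0 < d ∧ f.IsHomogeneous d}

lemma actG_X {m : ℕ} (g : Matrix (Fin 2) (Fin 2) ℂ) (p : Fin 2 × Fin m) :
    actG g (X p) = ∑ b : Fin 2, g p.1 b • X (b, p.2) := aeval_X _ _

lemma actG_mul {m : ℕ} (g h : Matrix (Fin 2) (Fin 2) ℂ) (f : PolyVm m) :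
    actG (g * h) f = actG h (actG g f) := by
  have : (actG (m := m) (g * h)) = (actG h).comp (actG g) := by
    apply MvPolynomial.algHom_ext
    intro p
    simp only [actG, AlgHom.coe_comp, Function.comp_apply, aeval_X, map_sum, map_smul,
      Matrix.mul_apply, Finset.sum_smul, smul_smul]
    rw [Finset.sum_comm]
    simp [Finset.smul_sum, smul_smul]
  rw [this]; rfl

lemma actG_one {m : ℕ} (f : PolyVm m) : actG (1 : Matrix (Fin 2) (Fin 2) ℂ) f = f := by
  have : (actG (m := m) (1 : Matrix (Fin 2) (Fin 2) ℂ)) = AlgHom.id ℂ _ := by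
    apply MvPolynomial.algHom_ext
    intro p
    simp [actG, Matrix.one_apply, ite_smul]
  rw [this]; rfl

lemma actGd_X0 {m : ℕ} (ω : ℂ) (i : Fin m) : actG (dMat ω) (X (0, i)) = ω • X ((0 : Fin 2), i) := by
  rw [actG_X]; simp [dMat, Fin.sum_univ_two]

lemma actGd_X1 {m : ℕ} (ω : ℂ) (i : Fin m) : actG (dMat ω) (X (1, i)) = ω⁻¹ • X ((1 : Fin 2), i) := by
  rw [actG_X]; simp [dMat, Fin.sum_univ_two]

lemma actGs_X0 {m : ℕ} (i : Fin m) : actG sMat (X (0, i)) = X ((1 : Fin 2), i) := by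
  rw [actG_X]; simp [sMat, Fin.sum_univ_two]

lemma actGs_X1 {m : ℕ} (i : Fin m) : actG sMat (X (1, i)) = X ((0 : Fin 2), i) := by
  rw [actG_X]; simp [sMat, Fin.sum_univ_two]

lemma mem_dihedralInv {m : ℕ} {ω : ℂ} {f : PolyVm m}
    (hd : actG (dMat ω) f = f) (hs : actG sMat f = f) : f ∈ dihedralInv m ω := by
  intro g hg
  induction hg using Submonoid.closure_induction with
  | mem x hx => rcases hx with h | h <;> subst h; exacts [hd, hs]
  | one => exact actG_one f
  | mul x y hx hy px py => rw [actG_mul, px, py]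

/-- membership in the Hilbert ideal for invariant homogeneous generators -/
lemma mem_H {m : ℕ} {ω : ℂ} {f : PolyVm m} (hd : actG (dMat ω) f = f) (hs : actG sMat f = f)
    {d : ℕ} (hdpos : 0 < d) (hf : f.IsHomogeneous d) : f ∈ hilbertIdeal m ω :=
  Ideal.subset_span ⟨mem_dihedralInv hd hs, d, hdpos, hf⟩

/-- The monomial `x^γ y^δ`. -/
def Mxy {m : ℕ} (γ δ : Fin m → ℕ) : PolyVm m :=
  (∏ i, X ((0 : Fin 2), i) ^ γ i) * (∏ i, X ((1 : Fin 2), i) ^ δ i)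
section Gen
variable {n m : ℕ} {ω : ℂ}

lemma prod_smul_poly {ι : Type*} (s : Finset ι) (b : ι → ℂ) {m : ℕ} (f : ι → PolyVm m) :
    ∏ i ∈ s, b i • f i = (∏ i ∈ s, b i) • ∏ i ∈ s, f i := by
  induction s using Finset.cons_induction with
  | empty => simp
  | cons j s hj ih =>
      rw [Finset.prod_cons, Finset.prod_cons, Finset.prod_cons, ih, smul_mul_smul_comm]

lemma prodX_isHomogeneous {m : ℕ} (a : Fin 2) (β : Fin m → ℕ) :
    (∏ i, X ((a : Fin 2), i) ^ β i : PolyVm m).IsHomogeneous (∑ i, β i) := by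
  apply IsHomogeneous.prod
  intro i _
  have h := (isHomogeneous_X ℂ ((a, i) : Fin 2 × Fin m)).pow (β i)
  rwa [one_mul] at h

/-- `x_i y_i ∈ H` -/
lemma G1_mem (hn : 0 < n) (hω : IsPrimitiveRoot ω n) (i : Fin m) :
    X ((0 : Fin 2), i) * X ((1 : Fin 2), i) ∈ hilbertIdeal m ω := by
  have hω0 : ω ≠ 0 := hω.ne_zero hn.ne'
  apply mem_H (d := 2)
  · rw [map_mul, actGd_X0, actGd_X1, smul_mul_smul_comm]
    rw [mul_inv_cancel₀ hω0, one_smul]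
  · rw [map_mul, actGs_X0, actGs_X1, mul_comm]
  · norm_num
  · exact (isHomogeneous_X _ _).mul (isHomogeneous_X _ _)

/-- `x_i y_j + x_j y_i ∈ H` -/
lemma G2_mem (hn : 0 < n) (hω : IsPrimitiveRoot ω n) (i j : Fin m) :
    X ((0 : Fin 2), i) * X ((1 : Fin 2), j) + X ((0 : Fin 2), j) * X ((1 : Fin 2), i)
      ∈ hilbertIdeal m ω := by
  have hω0 : ω ≠ 0 := hω.ne_zero hn.ne'
  apply mem_H (d := 2)
  · simp only [map_add, map_mul, actGd_X0, actGd_X1, smul_mul_smul_comm,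
      mul_inv_cancel₀ hω0, one_smul]
  · simp only [map_add, map_mul, actGs_X0, actGs_X1]
    ring
  · norm_num
  · exact ((isHomogeneous_X _ _).mul (isHomogeneous_X _ _)).add
      ((isHomogeneous_X _ _).mul (isHomogeneous_X _ _))

/-- `x^β + y^β ∈ H` for `|β| = n` -/
lemma G3_mem (hn : 0 < n) (hω : IsPrimitiveRoot ω n) (β : Fin m → ℕ) (hβ : ∑ i, β i = n) :
    (∏ i, X ((0 : Fin 2), i) ^ β i) + (∏ i, X ((1 : Fin 2), i) ^ β i) ∈ hilbertIdeal m ω := by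
  have hωn : ω ^ n = 1 := hω.pow_eq_one
  have hinv : (ω⁻¹) ^ n = 1 := by
    rw [inv_pow, hωn, inv_one]
  apply mem_H (d := n)
  · simp only [map_add, map_prod, map_pow, actGd_X0, actGd_X1, smul_pow]
    have e0 : ∏ x : Fin m, (ω ^ β x) • (X ((0 : Fin 2), x) ^ β x)
        = (∏ x : Fin m, ω ^ β x) • ∏ x : Fin m, X ((0 : Fin 2), x) ^ β x :=
      prod_smul_poly _ _ _
    have e1 : ∏ x : Fin m, (ω⁻¹ ^ β x) • (X ((1 : Fin 2), x) ^ β x)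
        = (∏ x : Fin m, ω⁻¹ ^ β x) • ∏ x : Fin m, X ((1 : Fin 2), x) ^ β x :=
      prod_smul_poly _ _ _
    rw [e0, e1, Finset.prod_pow_eq_pow_sum, Finset.prod_pow_eq_pow_sum,
      hβ, hωn, hinv, one_smul, one_smul]
  · simp only [map_add, map_prod, map_pow, actGs_X0, actGs_X1]
    rw [add_comm]
  · exact hn
  · exact hβ ▸ (prodX_isHomogeneous 0 β).add (prodX_isHomogeneous 1 β)

end Gen
section MxyLemmas
variable {n m : ℕ} {ω : ℂ}

lemma prodX_add (a : Fin 2) (γ₁ γ₂ : Fin m → ℕ) :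
    (∏ i, X ((a : Fin 2), i) ^ (γ₁ + γ₂) i : PolyVm m)
      = (∏ i, X (a, i) ^ γ₁ i) * ∏ i, X (a, i) ^ γ₂ i := by
  rw [← Finset.prod_mul_distrib]
  exact Finset.prod_congr rfl fun i _ => by rw [Pi.add_apply, pow_add]

lemma prodX_single (a : Fin 2) (k : Fin m) :
    (∏ i, X ((a : Fin 2), i) ^ Pi.single k 1 i : PolyVm m) = X (a, k) := by
  rw [Finset.prod_eq_single k]
  · simp
  · intro b _ hb
    simp [Pi.single_eq_of_ne hb]
  · simp

lemma prodX_zero (a : Fin 2) :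
    (∏ i, X ((a : Fin 2), i) ^ (0 : Fin m → ℕ) i : PolyVm m) = 1 := by
  simp

lemma Mxy_addx (γ δ : Fin m → ℕ) (k : Fin m) :
    Mxy (γ + Pi.single k 1) δ = X ((0 : Fin 2), k) * Mxy γ δ := by
  unfold Mxy
  rw [prodX_add, prodX_single]
  ring

lemma Mxy_addy (γ δ : Fin m → ℕ) (k : Fin m) :
    Mxy γ (δ + Pi.single k 1) = X ((1 : Fin 2), k) * Mxy γ δ := by
  unfold Mxy
  rw [prodX_add, prodX_single]
  ring

lemma Rel1 (hn : 0 < n) (hω : IsPrimitiveRoot ω n) (γ δ : Fin m → ℕ) (i : Fin m) :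
    Mxy (γ + Pi.single i 1) (δ + Pi.single i 1) ∈ hilbertIdeal m ω := by
  rw [Mxy_addx, Mxy_addy, ← mul_assoc]
  exact Ideal.mul_mem_right _ _ (G1_mem hn hω i)

lemma Rel2 (hn : 0 < n) (hω : IsPrimitiveRoot ω n) (γ δ : Fin m → ℕ) (i j : Fin m) :
    Mxy (γ + Pi.single i 1) (δ + Pi.single j 1) + Mxy (γ + Pi.single j 1) (δ + Pi.single i 1)
      ∈ hilbertIdeal m ω := by
  have e : Mxy (γ + Pi.single i 1) (δ + Pi.single j 1)
        + Mxy (γ + Pi.single j 1) (δ + Pi.single i 1)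
      = (X ((0 : Fin 2), i) * X ((1 : Fin 2), j) + X ((0 : Fin 2), j) * X ((1 : Fin 2), i))
        * Mxy γ δ := by
    rw [Mxy_addx, Mxy_addy, Mxy_addx, Mxy_addy]
    ring
  rw [e]
  exact Ideal.mul_mem_right _ _ (G2_mem hn hω i j)

lemma Rel3 (hn : 0 < n) (hω : IsPrimitiveRoot ω n) (β : Fin m → ℕ) (hβ : ∑ i, β i = n)
    (k : Fin m) :
    Mxy (β + Pi.single k 1) 0 + Mxy (Pi.single k 1) β ∈ hilbertIdeal m ω := by
  have e : Mxy (β + Pi.single k 1) (0 : Fin m → ℕ) + Mxy (Pi.single k 1) β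
      = ((∏ i, X ((0 : Fin 2), i) ^ β i) + ∏ i, X ((1 : Fin 2), i) ^ β i)
        * X ((0 : Fin 2), k) := by
    unfold Mxy
    rw [prodX_add, prodX_single]
    simp only [Pi.zero_apply, pow_zero, Finset.prod_const_one]
    ring
  rw [e]
  exact Ideal.mul_mem_right _ _ (G3_mem hn hω β hβ)

lemma exists_decomp (γ : Fin m → ℕ) (i : Fin m) (h : 1 ≤ γ i) :
    ∃ γ' : Fin m → ℕ, γ = γ' + Pi.single i 1 := by
  refine ⟨fun t => γ t - (Pi.single i 1 : Fin m → ℕ) t, ?_⟩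
  funext t
  by_cases ht : t = i
  · subst ht; simp only [Pi.add_apply, Pi.single_eq_same]; omega
  · simp [Pi.single_eq_of_ne ht]

lemma Hoverlap (hn : 0 < n) (hω : IsPrimitiveRoot ω n) (γ δ : Fin m → ℕ) (i : Fin m)
    (hγ : 1 ≤ γ i) (hδ : 1 ≤ δ i) : Mxy γ δ ∈ hilbertIdeal m ω := by
  obtain ⟨γ', rfl⟩ := exists_decomp γ i hγ
  obtain ⟨δ', rfl⟩ := exists_decomp δ i hδ
  exact Rel1 hn hω γ' δ' i

lemma actGs_Mxy (γ δ : Fin m → ℕ) : actG sMat (Mxy γ δ) = Mxy δ γ := by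
  unfold Mxy
  rw [map_mul, map_prod, map_prod]
  simp only [map_pow, actGs_X0, actGs_X1]
  ring

lemma H_stable {f : PolyVm m} (hf : f ∈ hilbertIdeal m ω) :
    actG sMat f ∈ hilbertIdeal m ω := by
  induction hf using Submodule.span_induction with
  | mem x hx =>
      have hinv : actG sMat x = x := hx.1 sMat (Submonoid.subset_closure (by simp))
      rw [hinv]
      exact Ideal.subset_span hx
  | zero => simp
  | add x y _ _ hx hy => rw [map_add]; exact Ideal.add_mem _ hx hy
  | smul r x _ hx =>
      rw [smul_eq_mul, map_mul]
      exact Ideal.mul_mem_left _ _ hx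

lemma Hsymm (γ δ : Fin m → ℕ) (h : Mxy δ γ ∈ hilbertIdeal m ω) :
    Mxy γ δ ∈ hilbertIdeal m ω := by
  have := H_stable h
  rwa [actGs_Mxy] at this

end MxyLemmas
section Core
variable {n m : ℕ} {ω : ℂ}

lemma two_le_sum_cases (γ : Fin m → ℕ) (h : 2 ≤ ∑ i, γ i) :
    (∃ i, 2 ≤ γ i) ∨ ∃ i j, i ≠ j ∧ 1 ≤ γ i ∧ 1 ≤ γ j := by
  obtain ⟨i, -, hi⟩ := Finset.exists_ne_zero_of_sum_ne_zero (f := γ) (s := Finset.univ)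
    (by omega)
  by_cases h2 : 2 ≤ γ i
  · exact Or.inl ⟨i, h2⟩
  · have hi1 : γ i = 1 := by omega
    have hsum : γ i + ∑ t ∈ Finset.univ.erase i, γ t = ∑ t, γ t :=
      Finset.add_sum_erase _ _ (Finset.mem_univ i)
    obtain ⟨j, hj, hj0⟩ := Finset.exists_ne_zero_of_sum_ne_zero
      (f := γ) (s := Finset.univ.erase i) (by omega)
    exact Or.inr ⟨i, j, (Finset.ne_of_mem_erase hj).symm, by omega, by omega⟩

lemma single_sum (k : Fin m) : ∑ i, (Pi.single k 1 : Fin m → ℕ) i = 1 := by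
  simp [Pi.single_apply]

lemma MIX (hn3 : 3 ≤ n) (hω : IsPrimitiveRoot ω n) (γ δ : Fin m → ℕ)
    (hdisj : ∀ t, γ t = 0 ∨ δ t = 0) (j : Fin m) (hj : 1 ≤ δ j) (h2 : 2 ≤ ∑ i, γ i) :
    Mxy γ δ ∈ hilbertIdeal m ω := by
  have hn : 0 < n := by omega
  obtain ⟨δ₀, rfl⟩ := exists_decomp δ j hj
  rcases two_le_sum_cases γ h2 with ⟨i, hi⟩ | ⟨i, i', hii', hi, hi'⟩
  · -- some γ i ≥ 2
    obtain ⟨γ₁, rfl⟩ := exists_decomp γ i (by omega)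
    have hγ₁ : 1 ≤ γ₁ i := by
      have := hi
      simp only [Pi.add_apply, Pi.single_eq_same] at this
      omega
    obtain ⟨γ₂, rfl⟩ := exists_decomp γ₁ i hγ₁
    have hAB := Rel2 (ω := ω) hn hω (γ₂ + Pi.single i 1) δ₀ i j
    have hB : Mxy (γ₂ + Pi.single i 1 + Pi.single j 1) (δ₀ + Pi.single i 1)
        ∈ hilbertIdeal m ω := by
      apply Hoverlap hn hω _ _ i
      · simp only [Pi.add_apply, Pi.single_eq_same, Pi.single_apply]
        split <;> omega
      · simp [Pi.single_apply]
    have := Ideal.sub_mem _ hAB hB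
    simpa using this
  · -- two distinct indices with γ ≥ 1
    obtain ⟨γ₁, rfl⟩ := exists_decomp γ i hi
    have hγ₁ : 1 ≤ γ₁ i' := by
      have := hi'
      simp only [Pi.add_apply, Pi.single_apply, if_neg (Ne.symm hii')] at this
      omega
    obtain ⟨γ₀, rfl⟩ := exists_decomp γ₁ i' hγ₁
    -- A = Mxy ((γ₀ + single i') + single i) (δ₀ + single j)
    have hAB := Rel2 (ω := ω) hn hω (γ₀ + Pi.single i' 1) δ₀ i j
    have hBC := Rel2 (ω := ω) hn hω (γ₀ + Pi.single j 1) δ₀ i' i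
    have hAC := Rel2 (ω := ω) hn hω (γ₀ + Pi.single i 1) δ₀ i' j
    rw [add_right_comm γ₀ (Pi.single j 1) (Pi.single i' 1)] at hBC
    rw [add_right_comm γ₀ (Pi.single j 1) (Pi.single i 1)] at hBC
    rw [add_right_comm γ₀ (Pi.single i 1) (Pi.single i' 1)] at hAC
    -- now hAB : A + B ∈ H, hBC : B + C ∈ H, hAC : A + C ∈ H
    set AA := Mxy (γ₀ + Pi.single i' 1 + Pi.single i 1) (δ₀ + Pi.single j 1) with hA
    set BB := Mxy (γ₀ + Pi.single i' 1 + Pi.single j 1) (δ₀ + Pi.single i 1) with hBdef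
    set CC := Mxy (γ₀ + Pi.single i 1 + Pi.single j 1) (δ₀ + Pi.single i' 1) with hC
    have h2A : AA + AA ∈ hilbertIdeal m ω := by
      have h := Ideal.sub_mem _ (Ideal.add_mem _ hAB hAC) hBC
      have e : AA + BB + (AA + CC) - (BB + CC) = AA + AA := by ring
      rwa [e] at h
    have e : (MvPolynomial.C (2⁻¹ : ℂ) : PolyVm m) * (AA + AA) = AA := by
      rw [← smul_eq_C_mul, smul_add, ← add_smul]
      norm_num
    rw [← e]
    exact Ideal.mul_mem_left _ _ h2A

lemma PURE (hn3 : 3 ≤ n) (hω : IsPrimitiveRoot ω n) (γ : Fin m → ℕ)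
    (hγ : ∑ i, γ i = n + 1) : Mxy γ 0 ∈ hilbertIdeal m ω := by
  have hn : 0 < n := by omega
  obtain ⟨k, -, hk⟩ := Finset.exists_ne_zero_of_sum_ne_zero (f := γ) (s := Finset.univ)
    (by omega)
  obtain ⟨β, rfl⟩ := exists_decomp γ k (by omega)
  have hβ : ∑ i, β i = n := by
    have : ∑ i, (β + Pi.single k 1 : Fin m → ℕ) i = (∑ i, β i) + ∑ i, (Pi.single k 1 : Fin m → ℕ) i := by
      rw [← Finset.sum_add_distrib]; rfl
    rw [this, single_sum] at hγ
    omega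
  have hrel := Rel3 (ω := ω) hn hω β hβ k
  have hM2 : Mxy (Pi.single k 1) β ∈ hilbertIdeal m ω := by
    by_cases hk2 : 1 ≤ β k
    · exact Hoverlap hn hω _ _ k (by simp) hk2
    · apply Hsymm
      apply MIX hn3 hω β (Pi.single k 1) ?_ k (by simp) (by omega)
      intro t
      by_cases ht : t = k
      · subst ht; left; omega
      · right; simp [Pi.single_eq_of_ne ht]
  have := Ideal.sub_mem _ hrel hM2
  simpa using this

lemma Mmem (hn3 : 3 ≤ n) (hω : IsPrimitiveRoot ω n) (γ δ : Fin m → ℕ)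
    (h : (∑ i, γ i) + ∑ i, δ i = n + 1) : Mxy γ δ ∈ hilbertIdeal m ω := by
  have hn : 0 < n := by omega
  by_cases hov : ∃ i, 1 ≤ γ i ∧ 1 ≤ δ i
  · obtain ⟨i, h1, h2⟩ := hov
    exact Hoverlap hn hω γ δ i h1 h2
  · push_neg at hov
    have hdisj : ∀ t, γ t = 0 ∨ δ t = 0 := by
      intro t
      by_cases h1 : γ t = 0
      · exact Or.inl h1
      · exact Or.inr (by have := hov t (by omega); omega)
    by_cases hδ0 : ∑ i, δ i = 0
    · have hδ : δ = 0 := funext fun t =>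
        (Finset.sum_eq_zero_iff.mp hδ0) t (Finset.mem_univ t)
      rw [hδ]
      exact PURE hn3 hω γ (by omega)
    by_cases hγ0 : ∑ i, γ i = 0
    · have hγ : γ = 0 := funext fun t =>
        (Finset.sum_eq_zero_iff.mp hγ0) t (Finset.mem_univ t)
      rw [hγ]
      exact Hsymm _ _ (PURE hn3 hω δ (by omega))
    obtain ⟨j, -, hj⟩ := Finset.exists_ne_zero_of_sum_ne_zero (f := δ) (s := Finset.univ) hδ0
    obtain ⟨i, -, hi⟩ := Finset.exists_ne_zero_of_sum_ne_zero (f := γ) (s := Finset.univ) hγ0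
    rcases (by omega : 2 ≤ ∑ i, γ i ∨ 2 ≤ ∑ i, δ i) with h2 | h2
    · exact MIX hn3 hω γ δ hdisj j (by omega) h2
    · exact Hsymm _ _ (MIX hn3 hω δ γ (fun t => (hdisj t).symm) i (by omega) h2)

end Core
section Assembly
variable {n m : ℕ} {ω : ℂ}

lemma monomial_eq_C_mul_Mxy (d : Fin 2 × Fin m →₀ ℕ) (c : ℂ) :
    (monomial d c : PolyVm m)
      = C c * Mxy (fun i => d (0, i)) (fun i => d (1, i)) := by
  rw [monomial_eq]
  congr 1
  rw [Finsupp.prod]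
  rw [Finset.prod_subset (Finset.subset_univ d.support)
    (fun p _ hp => by rw [Finsupp.notMem_support_iff.mp hp, pow_zero])]
  rw [Fintype.prod_prod_type, Fin.prod_univ_two]
  rfl

lemma degree_split (d : Fin 2 × Fin m →₀ ℕ) :
    (∑ p ∈ d.support, d p) = (∑ i, d (0, i)) + ∑ i, d (1, i) := by
  rw [Finset.sum_subset (Finset.subset_univ d.support)
    (fun p _ hp => Finsupp.notMem_support_iff.mp hp)]
  rw [Fintype.sum_prod_type, Fin.sum_univ_two]

lemma homogeneous_mem (hn3 : 3 ≤ n) (hω : IsPrimitiveRoot ω n) (f : PolyVm m)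
    (hf : f.IsHomogeneous (n + 1)) : f ∈ hilbertIdeal m ω := by
  rw [← support_sum_monomial_coeff f]
  apply Ideal.sum_mem
  intro d hd
  have hdeg : Finsupp.degree d = n + 1 := by
    rw [Finsupp.degree_eq_weight_one]
    exact hf (mem_support_iff.mp hd)
  have hsum : (∑ i, d (0, i)) + ∑ i, d (1, i) = n + 1 := by
    rw [← degree_split]
    exact hdeg
  rw [monomial_eq_C_mul_Mxy]
  exact Ideal.mul_mem_left _ _ (Mmem hn3 hω _ _ hsum)

end Assembly
section Part2
variable {n m : ℕ} {ω : ℂ}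

lemma actGd_Mxy (ω : ℂ) (γ δ : Fin m → ℕ) :
    actG (dMat ω) (Mxy γ δ)
      = (ω ^ (∑ i, γ i) * ω⁻¹ ^ (∑ i, δ i)) • Mxy γ δ := by
  unfold Mxy
  rw [map_mul, map_prod, map_prod]
  simp only [map_pow, actGd_X0, actGd_X1, smul_pow]
  rw [prod_smul_poly, prod_smul_poly, Finset.prod_pow_eq_pow_sum, Finset.prod_pow_eq_pow_sum,
    smul_mul_smul_comm]

lemma actGd_monomial (ω : ℂ) (d : Fin 2 × Fin m →₀ ℕ) (c : ℂ) :
    actG (dMat ω) (monomial d c)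
      = monomial d ((ω ^ (∑ i, d (0, i)) * ω⁻¹ ^ (∑ i, d (1, i))) * c) := by
  have hC : actG (dMat ω) (MvPolynomial.C c : PolyVm m) = MvPolynomial.C c := by
    simp [actG, algebraMap_eq]
  rw [monomial_eq_C_mul_Mxy, monomial_eq_C_mul_Mxy, map_mul, hC, actGd_Mxy, smul_eq_C_mul,
    C_mul]
  simp only [C_mul]
  ring

lemma coeff_actGd (ω : ℂ) (f : PolyVm m) (d : Fin 2 × Fin m →₀ ℕ) :
    coeff d (actG (dMat ω) f)
      = (ω ^ (∑ i, d (0, i)) * ω⁻¹ ^ (∑ i, d (1, i))) * coeff d f := by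
  have hrw : actG (dMat ω) f = ∑ d' ∈ f.support,
      monomial d' ((ω ^ (∑ i, d' (0, i)) * ω⁻¹ ^ (∑ i, d' (1, i))) * coeff d' f) := by
    conv_lhs => rw [← support_sum_monomial_coeff f]
    rw [map_sum]
    exact Finset.sum_congr rfl fun d' _ => actGd_monomial ω d' _
  rw [hrw, coeff_sum]
  simp only [coeff_monomial]
  rw [Finset.sum_ite_eq' f.support d]
  by_cases hd : d ∈ f.support
  · rw [if_pos hd]
  · rw [if_neg hd, notMem_support_iff.mp hd, mul_zero]

/-- the variable swap -/
def swapP {m : ℕ} : Fin 2 × Fin m → Fin 2 × Fin m :=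
  fun p => (if p.1 = 0 then 1 else 0, p.2)

lemma swapP_invol : ∀ p : Fin 2 × Fin m, swapP (swapP p) = p := by
  intro ⟨a, i⟩
  unfold swapP
  fin_cases a <;> simp

lemma swapP_inj : Function.Injective (swapP (m := m)) :=
  Function.Involutive.injective swapP_invol

lemma actGs_eq : (actG sMat : PolyVm m →ₐ[ℂ] PolyVm m) = rename swapP := by
  apply MvPolynomial.algHom_ext
  intro ⟨a, i⟩
  rw [rename_X]
  have ha : a = 0 ∨ a = 1 := by omega
  rcases ha with ha | ha <;> subst ha
  · rw [actGs_X0]; unfold swapP; norm_num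
  · rw [actGs_X1]; unfold swapP; norm_num

lemma coeff_swap_inv {f : PolyVm m} (hs : actG sMat f = f) (d : Fin 2 × Fin m →₀ ℕ) :
    coeff (d.mapDomain swapP) f = coeff d f := by
  conv_lhs => rw [← hs]
  rw [DFunLike.congr_fun (actGs_eq (m := m)) f]
  exact coeff_rename_mapDomain swapP swapP_inj f d

lemma antidiag_single {α : Type*} [DecidableEq α] (p : α) (k : ℕ) (u v : α →₀ ℕ)
    (h : u + v = Finsupp.single p k) :
    u = Finsupp.single p (u p) ∧ v = Finsupp.single p (v p) ∧ u p + v p = k := by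
  have hq : ∀ q, q ≠ p → u q = 0 ∧ v q = 0 := by
    intro q hqp
    have h1 := DFunLike.congr_fun h q
    rw [Finsupp.add_apply, Finsupp.single_apply, if_neg (Ne.symm hqp)] at h1
    omega
  have hp := DFunLike.congr_fun h p
  rw [Finsupp.add_apply, Finsupp.single_eq_same] at hp
  refine ⟨?_, ?_, hp⟩ <;>
  · ext q
    by_cases hqp : q = p
    · subst hqp; rw [Finsupp.single_eq_same]
    · rw [Finsupp.single_apply, if_neg (Ne.symm hqp)]
      first
      | exact (hq q hqp).1
      | exact (hq q hqp).2

lemma deg_single {α : Type*} [DecidableEq α] (p : α) (b : ℕ) :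
    Finsupp.degree (Finsupp.single p b) = b := by
  by_cases hb : b = 0
  · subst hb; simp
  · rw [Finsupp.degree_single]

lemma coeff_mul_single_key (hn3 : 3 ≤ n) (hω : IsPrimitiveRoot ω n)
    (p0 : Fin 2 × Fin m)
    (hcomp : ∀ b : ℕ,
      ω ^ (∑ i, (Finsupp.single p0 b) ((0 : Fin 2), i))
        * ω⁻¹ ^ (∑ i, (Finsupp.single p0 b) ((1 : Fin 2), i)) = 1 → ω ^ b = 1)
    (h f : PolyVm m) (hfd : actG (dMat ω) f = f)
    {dd : ℕ} (hdd : 0 < dd) (hfh : f.IsHomogeneous dd) :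
    coeff (Finsupp.single p0 n) (h * f)
      = coeff 0 h * coeff (Finsupp.single p0 n) f := by
  rw [coeff_mul]
  have hterm : ∀ uv ∈ Finset.HasAntidiagonal.antidiagonal (Finsupp.single p0 n),
      coeff uv.1 h * coeff uv.2 f
        = if uv = ((0 : Fin 2 × Fin m →₀ ℕ), Finsupp.single p0 n) then
            coeff uv.1 h * coeff uv.2 f else 0 := by
    intro uv huv
    rw [Finset.HasAntidiagonal.mem_antidiagonal] at huv
    split_ifs with hcase
    · rfl
    · by_cases hv : coeff uv.2 f = 0
      · rw [hv, mul_zero]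
      · exfalso
        obtain ⟨hu, hv', hk⟩ := antidiag_single p0 n uv.1 uv.2 huv
        set b := uv.2 p0 with hbdef
        -- homogeneity
        have hdeg : Finsupp.degree uv.2 = dd := by
          rw [Finsupp.degree_eq_weight_one]
          exact hfh hv
        have hb_dd : b = dd := by
          rw [hv', deg_single] at hdeg
          exact hdeg
        -- d-invariance
        have hcoe := coeff_actGd ω f uv.2
        rw [hfd] at hcoe
        have hw : ω ^ (∑ i, uv.2 ((0 : Fin 2), i)) * ω⁻¹ ^ (∑ i, uv.2 ((1 : Fin 2), i)) = 1 :=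
          mul_right_cancel₀ hv (by rw [one_mul, ← hcoe])
        have hwb : ω ^ b = 1 := by
          apply hcomp
          rw [← hv']
          exact hw
        have hdvd : n ∣ b := (hω.pow_eq_one_iff_dvd b).mp hwb
        have hbn : b = n := by
          have hnb : n ≤ b := Nat.le_of_dvd (by omega) hdvd
          omega
        apply hcase
        have hu0 : uv.1 = 0 := by
          rw [hu]
          have : uv.1 p0 = 0 := by omega
          rw [this, Finsupp.single_zero]
        have hv0 : uv.2 = Finsupp.single p0 n := by rw [hv', hbn]
        exact Prod.ext hu0 hv0
  rw [Finset.sum_congr rfl hterm]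
  rw [Finset.sum_ite_eq' (Finset.HasAntidiagonal.antidiagonal (Finsupp.single p0 n))
    ((0 : Fin 2 × Fin m →₀ ℕ), Finsupp.single p0 n)
    (fun uv => coeff uv.1 h * coeff uv.2 f)]
  rw [if_pos (Finset.HasAntidiagonal.mem_antidiagonal.mpr (zero_add _))]

end Part2
section Final
variable {n m : ℕ} {ω : ℂ}

lemma sum_single_eq (a : Fin 2) (i0 : Fin m) (b : ℕ) :
    ∑ i, (Finsupp.single ((a : Fin 2), i0) b) ((a : Fin 2), i) = b := by
  simp [Finsupp.single_apply, Prod.ext_iff]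

lemma sum_single_ne (a a' : Fin 2) (h : a ≠ a') (i0 : Fin m) (b : ℕ) :
    ∑ i, (Finsupp.single ((a : Fin 2), i0) b) ((a' : Fin 2), i) = 0 := by
  simp [Finsupp.single_apply, Prod.ext_iff, h]

lemma L_vanish (hn3 : 3 ≤ n) (hω : IsPrimitiveRoot ω n) (i0 : Fin m) {x : PolyVm m}
    (hx : x ∈ hilbertIdeal m ω) :
    ∀ h : PolyVm m,
      coeff (Finsupp.single ((0 : Fin 2), i0) n) (h * x)
        = coeff (Finsupp.single ((1 : Fin 2), i0) n) (h * x) := by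
  induction hx using Submodule.span_induction with
  | mem f hf =>
      intro h
      obtain ⟨hinv, dd, hdd, hfh⟩ := hf
      have hfd : actG (dMat ω) f = f := hinv _ (Submonoid.subset_closure (by simp))
      have hfs : actG sMat f = f := hinv _ (Submonoid.subset_closure (by simp))
      have hx0 := coeff_mul_single_key hn3 hω ((0 : Fin 2), i0)
        (fun b hyp => by
          rw [sum_single_eq, sum_single_ne 0 1 (by norm_num) i0 b] at hyp
          simpa using hyp) h f hfd hdd hfh
      have hy0 := coeff_mul_single_key hn3 hω ((1 : Fin 2), i0)
        (fun b hyp => by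
          rw [sum_single_eq, sum_single_ne 1 0 (by norm_num) i0 b] at hyp
          simp only [pow_zero, one_mul, inv_pow] at hyp
          exact inv_eq_one.mp hyp) h f hfd hdd hfh
      rw [hx0, hy0]
      congr 1
      have hswap := coeff_swap_inv hfs (Finsupp.single ((0 : Fin 2), i0) n)
      rw [Finsupp.mapDomain_single] at hswap
      have : swapP ((0 : Fin 2), i0) = ((1 : Fin 2), i0) := by unfold swapP; norm_num
      rw [this] at hswap
      exact hswap.symm
  | zero => intro h; simp
  | add x y _ _ ihx ihy =>
      intro h
      rw [mul_add, coeff_add, coeff_add, ihx h, ihy h]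
  | smul r x _ ihx =>
      intro h
      rw [smul_eq_mul, ← mul_assoc]
      exact ihx (h * r)

end Final
/-- `τ_{D_{2n}}(V^m) = n + 1`: every homogeneous polynomial of degree `n+1` lies in the
Hilbert ideal of `D_{2n}`, while not every homogeneous polynomial of degree `n` does. -/
theorem tau_dihedral_eq_n_add_one
    (n : ℕ) (hn : 3 ≤ n) (ω : ℂ) (hω : IsPrimitiveRoot ω n) (m : ℕ) (hm : 1 ≤ m) :
    (∀ f : PolyVm m, f.IsHomogeneous (n + 1) → f ∈ hilbertIdeal m ω) ∧
    ¬ (∀ f : PolyVm m, f.IsHomogeneous n → f ∈ hilbertIdeal m ω) := by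
  constructor
  · intro f hf
    exact homogeneous_mem hn hω f hf
  · intro hall
    have hm' : 0 < m := hm
    set i0 : Fin m := ⟨0, hm'⟩ with hi0
    set f₀ : PolyVm m := monomial (Finsupp.single ((0 : Fin 2), i0) n) (1 : ℂ) with hf₀
    have hhom : f₀.IsHomogeneous n := isHomogeneous_monomial 1 (deg_single _ n)
    have hmem := hall f₀ hhom
    have hL := L_vanish hn hω i0 hmem 1
    rw [one_mul] at hL
    have hx : coeff (Finsupp.single ((0 : Fin 2), i0) n) f₀ = 1 := by
      rw [hf₀, coeff_monomial, if_pos rfl]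
    have hy : coeff (Finsupp.single ((1 : Fin 2), i0) n) f₀ = 0 := by
      rw [hf₀, coeff_monomial, if_neg]
      intro hcon
      have := DFunLike.congr_fun hcon ((0 : Fin 2), i0)
      rw [Finsupp.single_eq_same, Finsupp.single_apply,
        if_neg (by simp [Prod.ext_iff])] at this
      omega
    rw [hx, hy] at hL
    exact one_ne_zero hL

end
end

section
/- For every integer n ≥ 3 and every 1 ≤ k ≤ ⌊n/2⌋, the identity (−1)^k (1/2) binom(2k,k) p_{n−k,k}² + Σ_{j=0}^{k−1} (−1)^j binom(2k,j) p_{n−j,j} p_{n−2k+j,2k−j} = 4^k q_{2,0}^{n−2k} (q_{1,1}² − q_{2,0} q_{0,2})^k holds in ℂ[x_1,y_1,x_2,y_2]. In particular the element R(n)_{2n−2k,2k} lies in ker(φ(n,m)) for every m ≥ 2. -/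
open MvPolynomial

noncomputable section

/-- Padding of a multi-index in `ℕ^l` by zeros to a multi-index in `ℕ^m`, `l ≤ m`. -/
def padIdx {l m : ℕ} (h : l ≤ m) (d : Fin l →₀ ℕ) : Fin m →₀ ℕ :=
  fsOf fun i => if hi : (i : ℕ) < l then d ⟨i, hi⟩ else 0

lemma padIdx_sum {l m : ℕ} (h : l ≤ m) (d : Fin l →₀ ℕ) :
    ∑ i, padIdx h d i = ∑ i, d i := by
  have h1 : ∑ i : Fin m, padIdx h d i
      = ∑ k ∈ Finset.range m, (fun k => if hk : k < l then d ⟨k, hk⟩ else 0) k := by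
    simp only [padIdx, fsOf_apply]
    exact Fin.sum_univ_eq_sum_range (fun k => if hk : k < l then d ⟨k, hk⟩ else 0) m
  have h3 : ∑ k ∈ Finset.range l, (fun k => if hk : k < l then d ⟨k, hk⟩ else 0) k
      = ∑ k ∈ Finset.range m, (fun k => if hk : k < l then d ⟨k, hk⟩ else 0) k := by
    apply Finset.sum_subset (Finset.range_subset_range.2 h)
    intro k _ hk
    have hkl : ¬ k < l := by simpa using hk
    simp [hkl]
  have h2 : ∑ k ∈ Finset.range l, (fun k => if hk : k < l then d ⟨k, hk⟩ else 0) k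
      = ∑ i : Fin l, d i := by
    rw [← Fin.sum_univ_eq_sum_range (fun k => if hk : k < l then d ⟨k, hk⟩ else 0) l]
    exact Finset.sum_congr rfl fun i _ => by simp [i.2]
  rw [h1, ← h3, h2]

/-- The embedding `F(n,l) → F(n,m)` on variables, padding multi-indices with zeros. -/
def padVar (n : ℕ) {l m : ℕ} (h : l ≤ m) : FVar n l → FVar n m :=
  Sum.elim (fun a => Sum.inl ⟨padIdx h a.1, by rw [padIdx_sum h]; exact a.2⟩)
           (fun b => Sum.inr ⟨padIdx h b.1, by rw [padIdx_sum h]; exact b.2⟩)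

/-- The embedding `F(n,l) → F(n,m)` (padding multi-indices with zeros). -/
def padF (n : ℕ) {l m : ℕ} (h : l ≤ m) : FAlg n l →ₐ[ℂ] FAlg n m :=
  rename (padVar n h)

/-- Substitution action of an `m×m` matrix on `ℂ[z₁,…,z_m]`: `z_j ↦ ∑_i g_{ij} z_i`. -/
def aSub {m : ℕ} (g : Matrix (Fin m) (Fin m) ℂ) :
    MvPolynomial (Fin m) ℂ →ₐ[ℂ] MvPolynomial (Fin m) ℂ :=
  aeval fun j => ∑ i, g i j • X i

/-- Rewriting a homogeneous polynomial of degree `2` in `ℂ[z₁,…,z_m]` as a linear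
combination of the variables `ρ_γ` of `F(n,m)`. -/
def lift2 (n m : ℕ) (P : MvPolynomial (Fin m) ℂ) : FAlg n m :=
  ∑ d ∈ P.support, if h : (∑ i, d i) = 2 then P.coeff d • X (Sum.inl ⟨d, h⟩) else 0

/-- Rewriting a homogeneous polynomial of degree `n` in `ℂ[z₁,…,z_m]` as a linear
combination of the variables `π_δ` of `F(n,m)`. -/
def liftn (n m : ℕ) (P : MvPolynomial (Fin m) ℂ) : FAlg n m :=
  ∑ d ∈ P.support, if h : (∑ i, d i) = n then P.coeff d • X (Sum.inr ⟨d, h⟩) else 0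

/-- The action of the matrix `g` on `F(n,m)`: under the identifications
`ρ_α ↔ z^α` (`|α| = 2`) and `π_β ↔ z^β` (`|β| = n`) it is the substitution action
`z_j ↦ ∑_i g_{ij} z_i`; equivalently `g·ρ_α = ∑ c_{α,γ}(g) ρ_γ` and
`g·π_β = ∑ d_{β,δ}(g) π_δ` with the coefficients coming from `g·q_α = ∑ c_{α,γ}(g) q_γ`
and `g·p_β = ∑ d_{β,δ}(g) p_δ`. -/
def glF (n m : ℕ) (g : Matrix (Fin m) (Fin m) ℂ) : FAlg n m →ₐ[ℂ] FAlg n m :=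
  aeval (Sum.elim (fun a => lift2 n m (aSub g (monomial a.1 1)))
                  (fun b => liftn n m (aSub g (monomial b.1 1))))

/-- An ideal of `F(n,m)` stable under the action of `GL_m(ℂ)`. -/
def GLStable (n m : ℕ) (I : Ideal (FAlg n m)) : Prop :=
  ∀ g : GL (Fin m) ℂ, ∀ u ∈ I, glF n m (g : Matrix (Fin m) (Fin m) ℂ) u ∈ I

/-- The smallest `GL_m(ℂ)`-stable ideal of `F(n,m)` containing a set `S`. -/
def glSpan (n m : ℕ) (S : Set (FAlg n m)) : Ideal (FAlg n m) :=
  sInf {I : Ideal (FAlg n m) | S ⊆ ↑I ∧ GLStable n m I}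


/-- `p_{a,b} = x₁^a x₂^b + y₁^a y₂^b` in `ℂ[x₁,y₁,x₂,y₂]`. -/
def pp (a b : ℕ) : PolyVm 2 := X (0,0) ^ a * X (0,1) ^ b + X (1,0) ^ a * X (1,1) ^ b

/-- `q_{2,0} = x₁y₁`. -/
def q20 : PolyVm 2 := X (0,0) * X (1,0)

/-- `q_{0,2} = x₂y₂`. -/
def q02 : PolyVm 2 := X (0,1) * X (1,1)

/-- `q_{1,1} = (x₁y₂ + x₂y₁)/2`. -/
def q11 : PolyVm 2 := C (1/2 : ℂ) * (X (0,0) * X (1,1) + X (0,1) * X (1,0))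

/-- The variable `ρ_{(a,b,0,…,0)}` of `F(n,m)`, `m ≥ 2`, `a+b = 2`. -/
def rhoPad2 (n : ℕ) {m : ℕ} (hm : 2 ≤ m) (a b : ℕ) (h : a + b = 2) : FAlg n m :=
  X (Sum.inl ⟨padIdx hm (fsOf ![a, b]), by rw [padIdx_sum, fsOf_sum2]; exact h⟩)

/-- The variable `π_{(a,b,0,…,0)}` of `F(n,m)`, `m ≥ 2`, `a+b = n`. -/
def piPad2 (n : ℕ) {m : ℕ} (hm : 2 ≤ m) (a b : ℕ) (h : a + b = n) : FAlg n m :=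
  X (Sum.inr ⟨padIdx hm (fsOf ![a, b]), by rw [padIdx_sum, fsOf_sum2]; exact h⟩)

/-- The relation `R(n)_{n,2} = π_{n,0}ρ_{0,2} − 2π_{n−1,1}ρ_{1,1} + π_{n−2,2}ρ_{2,0}`,
viewed in `F(n,m)` for any `m ≥ 2`. -/
def Rn2 (n : ℕ) (hn : 3 ≤ n) {m : ℕ} (hm : 2 ≤ m) : FAlg n m :=
  piPad2 n hm n 0 (by omega) * rhoPad2 n hm 0 2 (by omega)
    - 2 * piPad2 n hm (n-1) 1 (by omega) * rhoPad2 n hm 1 1 (by omega)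
    + piPad2 n hm (n-2) 2 (by omega) * rhoPad2 n hm 2 0 (by omega)

/-- The relation `R(n)_{2n−2k,2k}` for `1 ≤ k ≤ ⌊n/2⌋`, viewed in `F(n,m)`, `m ≥ 2`:
`(−1)^k ½ C(2k,k) π_{n−k,k}² + ∑_{j=0}^{k−1} (−1)^j C(2k,j) π_{n−j,j} π_{n−2k+j,2k−j}
  − 4^k ρ_{2,0}^{n−2k} (ρ_{1,1}² − ρ_{2,0}ρ_{0,2})^k`. -/
def Rnk (n k : ℕ) (hn : 3 ≤ n) (hk1 : 1 ≤ k) (hk2 : k ≤ n / 2) {m : ℕ} (hm : 2 ≤ m) :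
    FAlg n m :=
  C ((-1 : ℂ) ^ k * ((2*k).choose k : ℂ) / 2) * piPad2 n hm (n-k) k (by omega) ^ 2
    + ∑ j ∈ (Finset.range k).attach,
        C ((-1 : ℂ) ^ (j : ℕ) * ((2*k).choose (j : ℕ) : ℂ)) *
          (piPad2 n hm (n - (j : ℕ)) (j : ℕ)
              (by have := Finset.mem_range.mp j.2; omega) *
           piPad2 n hm (n - 2*k + (j : ℕ)) (2*k - (j : ℕ))
              (by have := Finset.mem_range.mp j.2; omega))
    - C ((4 : ℂ) ^ k) * rhoPad2 n hm 2 0 (by omega) ^ (n - 2*k) *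
        (rhoPad2 n hm 1 1 (by omega) ^ 2
          - rhoPad2 n hm 2 0 (by omega) * rhoPad2 n hm 0 2 (by omega)) ^ k


/-! ### Auxiliary lemmas -/

lemma my_neg_one_pow_sub {R : Type*} [CommRing R] {k j : ℕ} (hj : j ≤ 2*k) :
    ((-1 : R)) ^ (2*k - j) = (-1) ^ j := by
  have h : (2*k - j) + 2*j = 2*k + j := by omega
  calc ((-1 : R)) ^ (2*k - j) = (-1) ^ ((2*k - j) + 2*j) := by
        rw [pow_add, pow_mul, neg_one_sq, one_pow, mul_one]
    _ = (-1) ^ (2*k + j) := by rw [h]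
    _ = (-1) ^ j := by rw [pow_add, pow_mul, neg_one_sq, one_pow, one_mul]

lemma my_master {R : Type*} [CommRing R] [Algebra ℂ R] (u v s t : R)
    (n k : ℕ) (hn : 3 ≤ n) (hk1 : 1 ≤ k) (hk2 : k ≤ n / 2) :
    algebraMap ℂ R ((-1) ^ k * ((2*k).choose k : ℂ) / 2) * (u^(n-k) * v^k + s^(n-k) * t^k) ^ 2
      + ∑ j ∈ Finset.range k,
          algebraMap ℂ R ((-1) ^ j * ((2*k).choose j : ℂ)) *
            ((u^(n-j) * v^j + s^(n-j) * t^j) *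
             (u^(n-2*k+j) * v^(2*k-j) + s^(n-2*k+j) * t^(2*k-j)))
      = (u*s)^(n-2*k) * (u*t - v*s)^(2*k) := by
  have h2k : 2*k ≤ n := by omega
  set c : ℕ → R := fun j => (-1 : R) ^ j * ((2*k).choose j : R) with hc
  set P : ℕ → R := fun a => u^(n-a) * v^a + s^(n-a) * t^a with hP
  set T : ℕ → R := fun j => c j * (P j * P (2*k - j)) with hT
  set M : R := (u*s)^(n-2*k) * (u*t - v*s)^(2*k) with hM
  have hTsymm : ∀ j, j ≤ 2*k → T (2*k - j) = T j := by
    intro j hj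
    simp only [hT, hc]
    rw [my_neg_one_pow_sub hj, Nat.choose_symm hj, Nat.sub_sub_self hj, mul_comm (P j)]
  have hcoef : ∀ j : ℕ, algebraMap ℂ R ((-1) ^ j * ((2*k).choose j : ℂ)) = c j := by
    intro j
    simp [hc, map_mul, map_pow, map_natCast]
  have hPP : ∀ j, j ≤ 2*k → P j * P (2*k - j)
      = u^(2*n-2*k) * v^(2*k)
        + ((u*s)^(n-2*k) * ((u*t)^(2*k-j) * (v*s)^j)
           + (u*s)^(n-2*k) * ((u*t)^j * (v*s)^(2*k-j)))
        + s^(2*n-2*k) * t^(2*k) := by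
    intro j hj
    have e1 : u^(n-j) = u^(n-2*k) * u^(2*k-j) := by rw [← pow_add]; congr 1; omega
    have e2 : s^(n-j) = s^(n-2*k) * s^(2*k-j) := by rw [← pow_add]; congr 1; omega
    have e3 : u^(n-(2*k-j)) = u^(n-2*k) * u^j := by rw [← pow_add]; congr 1; omega
    have e4 : s^(n-(2*k-j)) = s^(n-2*k) * s^j := by rw [← pow_add]; congr 1; omega
    have e5 : u^(2*n-2*k) = u^(n-2*k) * u^(n-2*k) * (u^(2*k-j) * u^j) := by
      rw [← pow_add, ← pow_add, ← pow_add]; congr 1; omega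
    have e6 : v^(2*k) = v^j * v^(2*k-j) := by rw [← pow_add]; congr 1; omega
    have e7 : s^(2*n-2*k) = s^(n-2*k) * s^(n-2*k) * (s^(2*k-j) * s^j) := by
      rw [← pow_add, ← pow_add, ← pow_add]; congr 1; omega
    have e8 : t^(2*k) = t^j * t^(2*k-j) := by rw [← pow_add]; congr 1; omega
    simp only [hP]
    rw [e1, e2, e3, e4, e5, e6, e7, e8, mul_pow, mul_pow, mul_pow, mul_pow, mul_pow]
    ring
  have hc0 : ∑ j ∈ Finset.range (2*k+1), c j = 0 := by
    have h := Int.alternating_sum_range_choose_of_ne (n := 2*k) (by omega)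
    have h2 : ((∑ m ∈ Finset.range (2*k+1), ((-1) ^ m * (2*k).choose m : ℤ) : ℤ) : R) = 0 := by
      rw [h]; simp
    rw [← h2]
    push_cast
    rfl
  have hB : ∑ j ∈ Finset.range (2*k+1), c j * ((u*t)^(2*k-j) * (v*s)^j)
      = (u*t - v*s)^(2*k) := by
    have hsub : u*t - v*s = -(v*s) + u*t := by ring
    rw [hsub, add_pow]
    refine Finset.sum_congr rfl fun j hj => ?_
    rw [neg_pow]
    simp only [hc]
    ring
  have hB' : ∑ j ∈ Finset.range (2*k+1), c j * ((u*t)^j * (v*s)^(2*k-j))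
      = (u*t - v*s)^(2*k) := by
    rw [← hB]
    rw [← Finset.sum_range_reflect (fun j => c j * ((u*t)^(2*k-j) * (v*s)^j)) (2*k+1)]
    refine Finset.sum_congr rfl fun j hj => ?_
    have hj' : j ≤ 2*k := by simpa [Nat.lt_succ_iff] using hj
    have h1 : 2*k + 1 - 1 - j = 2*k - j := by omega
    have h2 : 2*k - (2*k - j) = j := by omega
    rw [h1, h2]
    simp only [hc]
    rw [my_neg_one_pow_sub hj', Nat.choose_symm hj']
  have hS : ∑ j ∈ Finset.range (2*k+1), T j = 2 * M := by
    calc ∑ j ∈ Finset.range (2*k+1), T j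
        = ∑ j ∈ Finset.range (2*k+1),
            (c j * (u^(2*n-2*k) * v^(2*k))
              + ((u*s)^(n-2*k) * (c j * ((u*t)^(2*k-j) * (v*s)^j))
                 + (u*s)^(n-2*k) * (c j * ((u*t)^j * (v*s)^(2*k-j))))
              + c j * (s^(2*n-2*k) * t^(2*k))) := by
          refine Finset.sum_congr rfl fun j hj => ?_
          have hj' : j ≤ 2*k := by simpa [Nat.lt_succ_iff] using hj
          simp only [hT]
          rw [hPP j hj']
          ring
      _ = (∑ j ∈ Finset.range (2*k+1), c j) * (u^(2*n-2*k) * v^(2*k))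
            + ((u*s)^(n-2*k) * ∑ j ∈ Finset.range (2*k+1), c j * ((u*t)^(2*k-j) * (v*s)^j)
               + (u*s)^(n-2*k) * ∑ j ∈ Finset.range (2*k+1), c j * ((u*t)^j * (v*s)^(2*k-j)))
            + (∑ j ∈ Finset.range (2*k+1), c j) * (s^(2*n-2*k) * t^(2*k)) := by
          rw [Finset.sum_add_distrib, Finset.sum_add_distrib, Finset.sum_add_distrib,
            Finset.sum_mul, Finset.sum_mul, Finset.mul_sum, Finset.mul_sum]
      _ = 2 * M := by rw [hc0, hB, hB', hM]; ring
  have hsplit : ∑ j ∈ Finset.range (2*k+1), T j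
      = (∑ j ∈ Finset.range k, T j) + T k + ∑ j ∈ Finset.range k, T j := by
    have h1 : ∑ j ∈ Finset.range (2*k+1), T j
        = ∑ j ∈ Finset.Ico 0 k, T j + ∑ j ∈ Finset.Ico k (2*k+1), T j := by
      rw [Finset.sum_Ico_consecutive _ (Nat.zero_le k) (by omega), ← Finset.range_eq_Ico]
    rw [h1, ← Finset.range_eq_Ico, Finset.sum_Ico_eq_sum_range]
    have h2 : 2*k+1-k = k+1 := by omega
    rw [h2, Finset.sum_range_succ']
    have h3 : ∑ j ∈ Finset.range k, T (k + (j+1)) = ∑ j ∈ Finset.range k, T j := by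
      rw [← Finset.sum_range_reflect (fun j => T (k + (j+1))) k]
      refine Finset.sum_congr rfl fun j hj => ?_
      have hj' : j < k := Finset.mem_range.mp hj
      have h4 : k + (k - 1 - j + 1) = 2*k - j := by omega
      rw [h4, hTsymm j (by omega)]
    rw [h3, add_zero]
    ring
  have hdiv : algebraMap ℂ R ((-1) ^ k * ((2*k).choose k : ℂ) / 2)
      = algebraMap ℂ R (1/2) * c k := by
    rw [← hcoef k, ← map_mul]
    congr 1
    ring
  have halfmul : algebraMap ℂ R (1/2) * 2 = 1 := by
    rw [show (2:R) = algebraMap ℂ R 2 by simp [map_ofNat], ← map_mul]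
    norm_num
  have hconv : ∀ j ∈ Finset.range k,
      algebraMap ℂ R ((-1) ^ j * ((2*k).choose j : ℂ)) *
        ((u^(n-j) * v^j + s^(n-j) * t^j) *
         (u^(n-2*k+j) * v^(2*k-j) + s^(n-2*k+j) * t^(2*k-j))) = T j := by
    intro j hj
    have hj' : j < k := Finset.mem_range.mp hj
    rw [hcoef j, hT]
    have h5 : n - 2*k + j = n - (2*k - j) := by omega
    rw [h5]
  rw [Finset.sum_congr rfl hconv, hdiv]
  have hPk : (u^(n-k) * v^k + s^(n-k) * t^k) ^ 2 = P k * P (2*k - k) := by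
    have h6 : 2*k - k = k := by omega
    rw [h6, hP, sq]
  rw [hPk]
  have hTk : algebraMap ℂ R (1/2) * (c k * (P k * P (2*k-k)))
      = algebraMap ℂ R (1/2) * T k := by
    simp only [hT]
  rw [mul_assoc, hTk]
  have h7 := hS
  rw [hsplit] at h7
  linear_combination (algebraMap ℂ R (1/2)) * h7
    + (M - ∑ j ∈ Finset.range k, T j) * halfmul

lemma my_rhs_eq {R : Type*} [CommRing R] [Algebra ℂ R] (u v s t : R) (n k : ℕ) :
    algebraMap ℂ R ((4:ℂ)^k) * (u*s)^(n-2*k) *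
      ((algebraMap ℂ R (1/2) * (u*t + v*s))^2 - (u*s)*(v*t))^k
    = (u*s)^(n-2*k) * (u*t - v*s)^(2*k) := by
  have hhalf : algebraMap ℂ R (1/2) * 2 = 1 := by
    rw [show (2:R) = algebraMap ℂ R 2 by simp [map_ofNat], ← map_mul]
    norm_num
  have key : (algebraMap ℂ R (1/2) * (u*t + v*s))^2 - (u*s)*(v*t)
      = (algebraMap ℂ R (1/2))^2 * (u*t - v*s)^2 := by
    linear_combination (u*v*s*t*(algebraMap ℂ R (1/2)*2 + 1)) * hhalf
  rw [key, mul_pow ((algebraMap ℂ R (1/2))^2) _ k, ← pow_mul, ← pow_mul]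
  have hunit : algebraMap ℂ R ((4:ℂ)^k) * (algebraMap ℂ R (1/2))^(2*k) = 1 := by
    rw [← map_pow, ← map_mul, show ((4:ℂ))^k * (1/2)^(2*k) = 1 by
      rw [pow_mul, ← mul_pow]; norm_num]
    exact map_one _
  linear_combination ((u*s)^(n-2*k) * (u*t - v*s)^(2*k)) * hunit

lemma my_padIdx_two_eq {m : ℕ} (hm : 2 ≤ m) (a b : ℕ) :
    padIdx hm (fsOf ![a, b])
      = Finsupp.single (⟨0, by omega⟩ : Fin m) a + Finsupp.single (⟨1, by omega⟩ : Fin m) b := by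
  ext ⟨iv, hiv⟩
  simp only [padIdx, fsOf_apply, Finsupp.coe_add, Pi.add_apply, Finsupp.single_apply]
  by_cases h0 : iv = 0
  · subst h0
    simp [Fin.ext_iff]
  · by_cases h1 : iv = 1
    · subst h1
      simp [Fin.ext_iff]
    · have h2 : ¬ (iv < 2) := by omega
      simp [h2, Fin.ext_iff, Ne.symm h0, Ne.symm h1]

lemma my_prodX_pad {m : ℕ} (hm : 2 ≤ m) (c : Fin 2) (a b : ℕ) :
    (∏ i, (X (c, i) : PolyVm m) ^ (padIdx hm (fsOf ![a, b])) i)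
      = X (c, (⟨0, by omega⟩ : Fin m)) ^ a * X (c, (⟨1, by omega⟩ : Fin m)) ^ b := by
  set i0 : Fin m := ⟨0, by omega⟩ with hi0
  set i1 : Fin m := ⟨1, by omega⟩ with hi1
  have hne : i0 ≠ i1 := by simp [hi0, hi1, Fin.ext_iff]
  have e0 : (⟨0, by omega⟩ : Fin m) = i0 := rfl
  have e1 : (⟨1, by omega⟩ : Fin m) = i1 := rfl
  have hout : ∀ i ∈ Finset.univ, i ∉ ({i0, i1} : Finset (Fin m)) →
      (X (c, i) : PolyVm m) ^ (padIdx hm (fsOf ![a, b])) i = 1 := by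
    intro i _ hi
    simp only [Finset.mem_insert, Finset.mem_singleton, not_or] at hi
    rw [my_padIdx_two_eq hm]
    simp [Finsupp.single_apply, Ne.symm hi.1, Ne.symm hi.2]
    simp [e0, e1, Ne.symm hi.1, Ne.symm hi.2]
  rw [← Finset.prod_subset (Finset.subset_univ ({i0, i1} : Finset (Fin m))) hout,
    Finset.prod_pair hne]
  rw [my_padIdx_two_eq hm]
  simp [Finsupp.single_apply, hne, Ne.symm hne]
  simp [e0, e1, hne, Ne.symm hne]

lemma my_pPoly_pad {m : ℕ} (hm : 2 ≤ m) (a b : ℕ) :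
    pPoly (padIdx hm (fsOf ![a, b]))
      = X (0, (⟨0, by omega⟩ : Fin m)) ^ a * X (0, (⟨1, by omega⟩ : Fin m)) ^ b
        + X (1, (⟨0, by omega⟩ : Fin m)) ^ a * X (1, (⟨1, by omega⟩ : Fin m)) ^ b := by
  unfold pPoly
  rw [my_prodX_pad hm 0 a b, my_prodX_pad hm 1 a b]

lemma my_qPoly_diag {m : ℕ} (i : Fin m) :
    qPoly (Finsupp.single i 1 + Finsupp.single i 1) = X (0, i) * X (1, i) := by
  have hset : Finset.univ.filter (fun ij : Fin m × Fin m =>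
      Finsupp.single ij.1 1 + Finsupp.single ij.2 1
        = Finsupp.single i 1 + Finsupp.single i 1) = {(i, i)} := by
    ext ⟨x, y⟩
    simp only [Finset.mem_filter, Finset.mem_univ, true_and, Finset.mem_singleton,
      Prod.mk.injEq]
    rw [Finsupp.single_add_single_eq_single_add_single one_ne_zero one_ne_zero]
    constructor
    · rintro (⟨h1, h2⟩ | ⟨-, h1, h2⟩ | ⟨h, -⟩)
      · exact ⟨h1, h2⟩
      · exact ⟨h1, h2⟩
      · omega
    · rintro ⟨h1, h2⟩
      exact Or.inl ⟨h1, h2⟩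
  unfold qPoly
  rw [hset]
  simp

lemma my_qPoly_off {m : ℕ} (i j : Fin m) (hij : i ≠ j) :
    qPoly (Finsupp.single i 1 + Finsupp.single j 1)
      = (2 : ℂ)⁻¹ • (X (0, i) * X (1, j) + X (0, j) * X (1, i)) := by
  have hset : Finset.univ.filter (fun ij : Fin m × Fin m =>
      Finsupp.single ij.1 1 + Finsupp.single ij.2 1
        = Finsupp.single i 1 + Finsupp.single j 1) = {(i, j), (j, i)} := by
    ext ⟨x, y⟩
    simp only [Finset.mem_filter, Finset.mem_univ, true_and, Finset.mem_insert,
      Finset.mem_singleton, Prod.mk.injEq]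
    rw [Finsupp.single_add_single_eq_single_add_single one_ne_zero one_ne_zero]
    constructor
    · rintro (⟨h1, h2⟩ | ⟨-, h1, h2⟩ | ⟨h, -⟩)
      · exact Or.inl ⟨h1, h2⟩
      · exact Or.inr ⟨h1, h2⟩
      · omega
    · rintro (⟨h1, h2⟩ | ⟨h1, h2⟩)
      · exact Or.inl ⟨h1, h2⟩
      · exact Or.inr (Or.inl ⟨rfl, h1, h2⟩)
  have hnotmem : ((i, j) : Fin m × Fin m) ∉ ({(j, i)} : Finset (Fin m × Fin m)) := by
    simp [Prod.ext_iff, hij]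
  unfold qPoly
  rw [hset, Finset.card_insert_of_notMem hnotmem, Finset.card_singleton,
    Finset.sum_insert hnotmem, Finset.sum_singleton]
  norm_num

/-- The identity
`(−1)^k ½ C(2k,k) p_{n−k,k}² + ∑_{j<k} (−1)^j C(2k,j) p_{n−j,j} p_{n−2k+j,2k−j}
  = 4^k q_{2,0}^{n−2k} (q_{1,1}² − q_{2,0}q_{0,2})^k` in `ℂ[x₁,y₁,x₂,y₂]` for
`1 ≤ k ≤ ⌊n/2⌋`; in particular `R(n)_{2n−2k,2k} ∈ ker φ(n,m)` for every `m ≥ 2`. -/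
theorem pq_relation_k_and_Rnk_mem_ker_phi
    (n : ℕ) (hn : 3 ≤ n) (k : ℕ) (hk1 : 1 ≤ k) (hk2 : k ≤ n / 2) :
    (C ((-1 : ℂ) ^ k * ((2*k).choose k : ℂ) / 2) * pp (n-k) k ^ 2
      + ∑ j ∈ Finset.range k,
          C ((-1 : ℂ) ^ j * ((2*k).choose j : ℂ)) * (pp (n-j) j * pp (n-2*k+j) (2*k-j))
      = C ((4 : ℂ) ^ k) * q20 ^ (n-2*k) * (q11 ^ 2 - q20 * q02) ^ k) ∧
    ∀ (m : ℕ) (hm : 2 ≤ m), Rnk n k hn hk1 hk2 hm ∈ RingHom.ker (phi n m) := by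
  constructor
  · have h1 := my_master (R := PolyVm 2) (X (0,0)) (X (0,1)) (X (1,0)) (X (1,1)) n k hn hk1 hk2
    have h2 := my_rhs_eq (R := PolyVm 2) (X (0,0)) (X (0,1)) (X (1,0)) (X (1,1)) n k
    rw [MvPolynomial.algebraMap_eq] at h1 h2
    simp only [pp, q20, q02, q11]
    rw [h1, ← h2]
  · intro m hm
    set i0 : Fin m := ⟨0, by omega⟩ with hi0
    set i1 : Fin m := ⟨1, by omega⟩ with hi1
    have hne : i0 ≠ i1 := by simp [hi0, hi1, Fin.ext_iff]
    rw [RingHom.mem_ker]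
    have hpad20 : padIdx hm (fsOf ![2, 0]) = Finsupp.single i0 1 + Finsupp.single i0 1 := by
      rw [my_padIdx_two_eq hm]
      rw [Finsupp.single_zero, add_zero, ← Finsupp.single_add]
    have hpad02 : padIdx hm (fsOf ![0, 2]) = Finsupp.single i1 1 + Finsupp.single i1 1 := by
      rw [my_padIdx_two_eq hm]
      rw [Finsupp.single_zero, zero_add, ← Finsupp.single_add]
    have hpad11 : padIdx hm (fsOf ![1, 1]) = Finsupp.single i0 1 + Finsupp.single i1 1 := by
      rw [my_padIdx_two_eq hm]
    have hphiP : ∀ (a b : ℕ) (h : a + b = n), (phi n m) (piPad2 n hm a b h)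
        = X (0, i0) ^ a * X (0, i1) ^ b + X (1, i0) ^ a * X (1, i1) ^ b := by
      intro a b h
      rw [phi, piPad2, aeval_X, Sum.elim_inr, my_pPoly_pad hm]
    have hphiR20 : (phi n m) (rhoPad2 n hm 2 0 (by omega)) = X (0, i0) * X (1, i0) := by
      rw [phi, rhoPad2, aeval_X, Sum.elim_inl]
      show qPoly (padIdx hm (fsOf ![2, 0])) = _
      rw [hpad20, my_qPoly_diag]
    have hphiR02 : (phi n m) (rhoPad2 n hm 0 2 (by omega)) = X (0, i1) * X (1, i1) := by
      rw [phi, rhoPad2, aeval_X, Sum.elim_inl]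
      show qPoly (padIdx hm (fsOf ![0, 2])) = _
      rw [hpad02, my_qPoly_diag]
    have hphiR11 : (phi n m) (rhoPad2 n hm 1 1 (by omega))
        = C (1/2 : ℂ) * (X (0, i0) * X (1, i1) + X (0, i1) * X (1, i0)) := by
      rw [phi, rhoPad2, aeval_X, Sum.elim_inl]
      show qPoly (padIdx hm (fsOf ![1, 1])) = _
      rw [hpad11, my_qPoly_off i0 i1 hne, MvPolynomial.smul_eq_C_mul]
      norm_num
    have hphiC : ∀ a : ℂ, (phi n m) (C a) = C a := by
      intro a
      rw [phi, aeval_C, MvPolynomial.algebraMap_eq]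
    have h1 := my_master (R := PolyVm m) (X (0, i0)) (X (0, i1)) (X (1, i0)) (X (1, i1))
      n k hn hk1 hk2
    have h2 := my_rhs_eq (R := PolyVm m) (X (0, i0)) (X (0, i1)) (X (1, i0)) (X (1, i1)) n k
    rw [MvPolynomial.algebraMap_eq] at h1 h2
    simp only [map_mul, map_pow] at h1 h2
    simp only [Rnk, map_sub, map_add, map_mul, map_pow, map_sum, hphiC, hphiP, hphiR20,
      hphiR02, hphiR11]
    rw [Finset.sum_attach (Finset.range k) (fun j =>
      C (-1 : ℂ) ^ j * C (((2*k).choose j : ℂ)) *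
        ((X (0, i0) ^ (n - j) * X (0, i1) ^ j + X (1, i0) ^ (n - j) * X (1, i1) ^ j) *
         (X (0, i0) ^ (n - 2*k + j) * X (0, i1) ^ (2*k - j)
           + X (1, i0) ^ (n - 2*k + j) * X (1, i1) ^ (2*k - j))))]
    rw [h1, h2, sub_self]


end
end
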